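/- arXiv:1808.10222 — 9 statements merged into one kernel-verified Lean document; each statement's English description precedes it below -/
import Mathlib

section
/- Let A₁,…,Aₙ be finite-outcome observables with outcome sets Ω₁,…,Ωₙ, and suppose there is an observable C with Aℓ ⪯ C for every ℓ, witnessed by Markov kernels pℓ with Aℓ(x) = ∑_y pℓ(x,y) C(y). Define p((x₁,…,xₙ), y) := ∏_{ℓ=1}^n pℓ(xℓ, y) and G := p ∗ C. Then p is a Markov kernel from the outcome set of C to Ω₁×⋯×Ωₙ, G is a joint observable of A₁,…,Aₙ (i.e. the ℓ-th marginal of G equals Aℓ for each ℓ), and G ⪯ C. -/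
noncomputable section

open scoped BigOperators

variable {H : Type*} [NormedAddCommGroup H] [InnerProductSpace ℂ H] [CompleteSpace H]

/-- A Markov kernel from `Ω₂` to `Ω₁`: nonnegative entries, columns summing to 1. -/
def IsMarkov {Ω₁ Ω₂ : Type*} [Fintype Ω₁] (p : Ω₁ → Ω₂ → ℝ) : Prop :=
  (∀ x y, 0 ≤ p x y) ∧ ∀ y, ∑ x, p x y = 1

/-- A finite-outcome observable (POVM): positive operators summing to the identity. -/
def IsObservable {Ω : Type*} [Fintype Ω] (A : Ω → H →L[ℂ] H) : Prop :=
  (∀ x, (A x).IsPositive) ∧ ∑ x, A x = 1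

/-- Post-processing of `A` by the kernel `p`. -/
def pproc {Ω₁ Ω₂ : Type*} [Fintype Ω₂] (p : Ω₁ → Ω₂ → ℝ) (A : Ω₂ → H →L[ℂ] H) :
    Ω₁ → H →L[ℂ] H := fun x => ∑ y, (p x y : ℂ) • A y

/-- `A ⪯ B` : `A` is a post-processing of `B`. -/
def PP {Ω₁ Ω₂ : Type*} [Fintype Ω₁] [Fintype Ω₂] (A : Ω₁ → H →L[ℂ] H)
    (B : Ω₂ → H →L[ℂ] H) : Prop := ∃ p, IsMarkov p ∧ A = pproc p B

/-- `G` is a joint observable of the observables `A ℓ`. -/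
def IsJoint {n : ℕ} {Ω : Fin n → Type*} [∀ ℓ, Fintype (Ω ℓ)] [∀ ℓ, DecidableEq (Ω ℓ)]
    (A : ∀ ℓ, Ω ℓ → H →L[ℂ] H) (G : (∀ ℓ, Ω ℓ) → H →L[ℂ] H) : Prop :=
  IsObservable G ∧ ∀ ℓ xℓ, (∑ x : ∀ ℓ, Ω ℓ, if x ℓ = xℓ then G x else 0) = A ℓ xℓ

open Finset

section Kernel

variable {ι : Type*} [Fintype ι] [DecidableEq ι] {Ω : ι → Type*} [∀ i, Fintype (Ω i)]
  {Ω' : Type*} {q : ∀ i, Ω i → Ω' → ℝ}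

theorem IsMarkov.pi (hq : ∀ i, IsMarkov (q i)) :
    IsMarkov (fun (x : ∀ i, Ω i) y => ∏ i, q i (x i) y) := by
  refine ⟨fun x y => prod_nonneg fun i _ => (hq i).1 (x i) y, fun y => ?_⟩
  rw [← Fintype.prod_sum fun i z => q i z y]
  exact prod_eq_one fun i _ => (hq i).2 y

theorem IsMarkov.sum_filter_pi_eq [∀ i, DecidableEq (Ω i)] (hq : ∀ i, IsMarkov (q i))
    (j : ι) (a : Ω j) (y : Ω') :
    ∑ x : ∀ i, Ω i with x j = a, ∏ i, q i (x i) y = q j a y := by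
  -- The slice `{x | x j = a}` is a box, so the sum factorizes; off `j` each factor is a column sum.
  have hcolumn : ∀ i, ∑ z ∈ Function.update (fun _ => univ) j {a} i, q i z y =
      Function.update (fun _ => (1 : ℝ)) j (q j a y) i := by
    intro i
    by_cases h : i = j
    · subst h; simp
    · simp [h, (hq i).2 y]
  rw [← Fintype.piFinset_univ, ← Fintype.piFinset_update_singleton_eq_filter_piFinset_eq
    (fun i => (univ : Finset (Ω i))) j (mem_univ a), ← prod_univ_sum _ fun i z => q i z y,
    prod_congr rfl fun i _ => hcolumn i, prod_update_of_mem (mem_univ j), prod_const_one, mul_one]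

end Kernel

section PostProcessing

variable {Ω₁ Ω₂ : Type*} [Fintype Ω₂] {p : Ω₁ → Ω₂ → ℝ}

omit [CompleteSpace H] in
theorem sum_pproc (s : Finset Ω₁) (A : Ω₂ → H →L[ℂ] H) :
    ∑ x ∈ s, pproc p A x = ∑ y, ((∑ x ∈ s, p x y : ℝ) : ℂ) • A y := by
  simp only [pproc, Complex.ofReal_sum, sum_smul]
  exact sum_comm

omit [CompleteSpace H] in
theorem IsMarkov.pproc_isObservable [Fintype Ω₁] (hp : IsMarkov p) {A : Ω₂ → H →L[ℂ] H}
    (hA : IsObservable A) : IsObservable (pproc p A) := by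
  refine ⟨fun x => ContinuousLinearMap.isPositive_sum _ fun y _ =>
    (hA.1 y).smul_of_nonneg (Complex.zero_le_real.2 (hp.1 x y)), ?_⟩
  simp only [sum_pproc, hp.2, Complex.ofReal_one, one_smul]
  exact hA.2

end PostProcessing

theorem product_kernel_joint_general {n : ℕ} {Ω : Fin n → Type*}
    [∀ ℓ, Fintype (Ω ℓ)] [∀ ℓ, DecidableEq (Ω ℓ)] {Ω' : Type*} [Fintype Ω']
    (A : ∀ ℓ, Ω ℓ → H →L[ℂ] H) (C : Ω' → H →L[ℂ] H)
    (hC : IsObservable C)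
    (q : ∀ ℓ, Ω ℓ → Ω' → ℝ) (hq : ∀ ℓ, IsMarkov (q ℓ))
    (hmarg : ∀ ℓ x, A ℓ x = ∑ y, (q ℓ x y : ℂ) • C y) :
    IsMarkov (fun (x : ∀ ℓ, Ω ℓ) (y : Ω') => ∏ ℓ, q ℓ (x ℓ) y) ∧
    IsJoint A (pproc (fun (x : ∀ ℓ, Ω ℓ) (y : Ω') => ∏ ℓ, q ℓ (x ℓ) y) C) ∧
    PP (pproc (fun (x : ∀ ℓ, Ω ℓ) (y : Ω') => ∏ ℓ, q ℓ (x ℓ) y) C) C := by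
  have hp := IsMarkov.pi hq
  refine ⟨hp, ⟨hp.pproc_isObservable hC, fun ℓ a => ?_⟩, _, hp, rfl⟩
  rw [← sum_filter, sum_pproc, hmarg]
  simp only [IsMarkov.sum_filter_pi_eq hq]

/-- From observables `A ℓ ⪯ C` one builds, via the product kernel, a joint observable
`G = p ∗ C` of the `A ℓ` with `G ⪯ C`. -/
theorem product_kernel_joint {n : ℕ} {Ω : Fin n → Type*}
    [∀ ℓ, Fintype (Ω ℓ)] [∀ ℓ, DecidableEq (Ω ℓ)] {Ω' : Type*} [Fintype Ω']
    (A : ∀ ℓ, Ω ℓ → H →L[ℂ] H) (C : Ω' → H →L[ℂ] H)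
    (hA : ∀ ℓ, IsObservable (A ℓ)) (hC : IsObservable C)
    (q : ∀ ℓ, Ω ℓ → Ω' → ℝ) (hq : ∀ ℓ, IsMarkov (q ℓ))
    (hmarg : ∀ ℓ x, A ℓ x = ∑ y, (q ℓ x y : ℂ) • C y) :
    IsMarkov (fun (x : ∀ ℓ, Ω ℓ) (y : Ω') => ∏ ℓ, q ℓ (x ℓ) y) ∧
    IsJoint A (pproc (fun (x : ∀ ℓ, Ω ℓ) (y : Ω') => ∏ ℓ, q ℓ (x ℓ) y) C) ∧
    PP (pproc (fun (x : ∀ ℓ, Ω ℓ) (y : Ω') => ∏ ℓ, q ℓ (x ℓ) y) C) C :=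
  product_kernel_joint_general A C hC q hq hmarg
end
end

section
/- Let P₁ = |ψ₁⟩⟨ψ₁| and P₂ = |ψ₂⟩⟨ψ₂| be one-dimensional projections onto orthogonal unit vectors ψ₁ ⟂ ψ₂. Let C and C' be two-outcome observables with C(i) ≥ Pᵢ and C'(i) ≥ Pᵢ for i = 1,2. If C ⪯ C' (i.e. C = p∗C' for some 2×2 Markov kernel p), then C = C'. -/
noncomputable section

open scoped BigOperators

variable {H : Type*} [NormedAddCommGroup H] [InnerProductSpace ℂ H] [CompleteSpace H]

/-!
Testing `C' j ≥ P j` against `ψ i`: the numbers `re ⟪ψ i, C' j (ψ i)⟫` are nonnegative, sum to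
`‖ψ i‖² = 1`, and the one with `j = i` is at least `1`, so they form the Kronecker delta. Hence
`re ⟪ψ i, C i (ψ i)⟫ = p i i`, which `C i ≥ P i` bounds below by `1`. A column of a Markov kernel
with a diagonal entry `≥ 1` is a unit vector, so `p` is the identity kernel and `C = C'`.
-/

open scoped InnerProductSpace

theorem eq_ite_of_sum_eq_one_of_one_le {ι : Type*} [Fintype ι] [DecidableEq ι] {f : ι → ℝ}
    (hf : ∀ j, 0 ≤ f j) (hsum : ∑ j, f j = 1) {i : ι} (hi : 1 ≤ f i) (j : ι) :
    f j = if j = i then 1 else 0 := by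
  have hfi : f i = 1 :=
    le_antisymm (hsum ▸ Finset.single_le_sum (fun j _ => hf j) (Finset.mem_univ i)) hi
  have hrest : ∑ j ∈ Finset.univ.erase i, f j = 0 := by
    linarith [Finset.add_sum_erase Finset.univ f (Finset.mem_univ i)]
  split_ifs with hji
  · exact hji ▸ hfi
  · exact (Finset.sum_eq_zero_iff_of_nonneg (fun j _ => hf j)).1 hrest j (by simp [hji])

theorem IsMarkov.eq_ite_of_one_le_diag {ι : Type*} [Fintype ι] [DecidableEq ι] {p : ι → ι → ℝ}
    (hp : IsMarkov p) (hdiag : ∀ i, 1 ≤ p i i) (x y : ι) :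
    p x y = if x = y then 1 else 0 :=
  eq_ite_of_sum_eq_one_of_one_le (fun x => hp.1 x y) (hp.2 y) (hdiag y) x

theorem one_le_re_inner_of_isPositive_sub_rankOne {𝕜 F : Type*} [RCLike 𝕜]
    [NormedAddCommGroup F] [InnerProductSpace 𝕜 F] {T : F →L[𝕜] F} {ψ : F} (hψ : ‖ψ‖ = 1)
    (hT : (T - (innerSL 𝕜 ψ).smulRight ψ).IsPositive) : 1 ≤ RCLike.re ⟪ψ, T ψ⟫_𝕜 := by
  have := hT.re_inner_nonneg_right ψ
  simpa [inner_sub_right, inner_smul_right, inner_self_eq_norm_sq_to_K, hψ] using this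

section

variable {E : Type*} [NormedAddCommGroup E] [InnerProductSpace ℂ E]

theorem pproc_ite_eq_self {ι : Type*} [Fintype ι] [DecidableEq ι] (A : ι → E →L[ℂ] E) :
    pproc (fun x y => if x = y then (1 : ℝ) else 0) A = A := by
  funext x
  simp [pproc]

theorem re_inner_pproc_apply {Ω₁ Ω₂ : Type*} [Fintype Ω₂] (p : Ω₁ → Ω₂ → ℝ)
    (A : Ω₂ → E →L[ℂ] E) (x : Ω₁) (v : E) :
    RCLike.re ⟪v, pproc p A x v⟫_ℂ = ∑ y, p x y * RCLike.re ⟪v, A y v⟫_ℂ := by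
  simp [pproc]

theorem IsObservable.sum_re_inner_apply {Ω : Type*} [Fintype Ω] {A : Ω → E →L[ℂ] E}
    (hA : IsObservable A) (v : E) : ∑ x, RCLike.re ⟪v, A x v⟫_ℂ = ‖v‖ ^ 2 := by
  have := congrArg (fun T : E →L[ℂ] E => RCLike.re ⟪v, T v⟫_ℂ) hA.2
  simpa [inner_sum, inner_self_eq_norm_sq_to_K, ← Complex.ofReal_pow] using this

theorem IsObservable.re_inner_apply_eq_ite {Ω : Type*} [Fintype Ω] [DecidableEq Ω]
    {D : Ω → E →L[ℂ] E} (hD : IsObservable D) {ψ : Ω → E} (hψ : ∀ i, ‖ψ i‖ = 1)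
    (hge : ∀ i, (D i - (innerSL ℂ (ψ i)).smulRight (ψ i)).IsPositive) (i j : Ω) :
    RCLike.re ⟪ψ i, D j (ψ i)⟫_ℂ = if j = i then 1 else 0 :=
  eq_ite_of_sum_eq_one_of_one_le (fun j => (hD.1 j).re_inner_nonneg_right (ψ i))
    (by rw [hD.sum_re_inner_apply, hψ i, one_pow])
    (one_le_re_inner_of_isPositive_sub_rankOne (hψ i) (hge i)) j

end

theorem discriminating_postprocessing_eq_general (ψ : Fin 2 → H) (hunit : ∀ i, ‖ψ i‖ = 1)
    (C C' : Fin 2 → H →L[ℂ] H) (hC' : IsObservable C')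
    (hCge : ∀ i, (C i - (innerSL ℂ (ψ i)).smulRight (ψ i)).IsPositive)
    (hC'ge : ∀ i, (C' i - (innerSL ℂ (ψ i)).smulRight (ψ i)).IsPositive)
    (h : PP C C') : C = C' := by
  obtain ⟨p, hp, rfl⟩ := h
  have hdiag : ∀ i, 1 ≤ p i i := fun i =>
    calc 1 ≤ RCLike.re ⟪ψ i, pproc p C' i (ψ i)⟫_ℂ :=
          one_le_re_inner_of_isPositive_sub_rankOne (hunit i) (hCge i)
      _ = ∑ j, p i j * if j = i then 1 else 0 := by
          simp only [re_inner_pproc_apply, hC'.re_inner_apply_eq_ite hunit hC'ge]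
      _ = p i i := by simp
  rw [show p = _ from funext₂ (hp.eq_ite_of_one_le_diag hdiag), pproc_ite_eq_self]

/-- Two-outcome observables discriminating a pair of orthogonal pure states:
if `C ⪯ C'` then `C = C'`. -/
theorem discriminating_postprocessing_eq (ψ : Fin 2 → H) (hunit : ∀ i, ‖ψ i‖ = 1)
    (horth : inner (𝕜 := ℂ) (ψ 0) (ψ 1) = 0)
    (C C' : Fin 2 → H →L[ℂ] H) (hC : IsObservable C) (hC' : IsObservable C')
    (hCge : ∀ i, (C i - (innerSL ℂ (ψ i)).smulRight (ψ i)).IsPositive)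
    (hC'ge : ∀ i, (C' i - (innerSL ℂ (ψ i)).smulRight (ψ i)).IsPositive)
    (h : PP C C') : C = C' :=
  discriminating_postprocessing_eq_general ψ hunit C C' hC' hCge hC'ge h
end
end

section
/- Let A₁,…,Aₙ be a finite set of compatible observables and let ([G_λ])_{λ∈Λ} be a monotonically increasing net (with respect to the post-processing order ⪯) of equivalence classes of joint observables of A₁,…,Aₙ. Then there exists a joint observable G̃ of A₁,…,Aₙ such that G_λ ⪯ G̃ for every λ, and moreover for any observable B, if G_λ ⪯ B for all λ then G̃ ⪯ B. -/
/-!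
In the weak operator topology the closed unit ball of `H →L[ℂ] H` is compact, and being a joint
observable of `A₁, …, Aₙ` is a closed condition, so the joint observables form a compact set.
The post-processing relation is closed as well, because the Markov kernels form a compact set
and `pproc` is jointly continuous. Take `G̃` to be a limit of the net along an ultrafilter finer
than `atTop`: it is a joint observable, `G_λ ⪯ G_μ` for all large `μ` passes to `G_λ ⪯ G̃`, and
`G_λ ⪯ B` for all `λ` passes to `G̃ ⪯ B`.
-/

noncomputable section

open scoped BigOperators

variable {H : Type*} [NormedAddCommGroup H] [InnerProductSpace ℂ H] [CompleteSpace H]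

open Filter Topology
open scoped InnerProductSpace ComplexOrder

section WOT

variable {𝕜 E : Type*} [RCLike 𝕜] [NormedAddCommGroup E] [InnerProductSpace 𝕜 E]

namespace ContinuousLinearMapWOT

lemma toCLM_sum {ι : Type*} (s : Finset ι) (T : ι → E →WOT[𝕜] E) :
    (∑ i ∈ s, T i).toCLM = ∑ i ∈ s, (T i).toCLM :=
  map_sum addEquiv T s

lemma isClosed_setOf_toCLM_eq {X : Type*} [TopologicalSpace X] {f : X → E →WOT[𝕜] E}
    (hf : Continuous f) (T : E →L[𝕜] E) : IsClosed {a | (f a).toCLM = T} := by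
  have : {a | (f a).toCLM = T} = f ⁻¹' {ofCLM T} :=
    Set.ext fun a => ⟨congrArg ofCLM, congrArg toCLM⟩
  exact this ▸ isClosed_singleton.preimage hf

end ContinuousLinearMapWOT

variable [CompleteSpace E]

theorem InnerProductSpace.exists_inner_apply_eq_sesqForm (B : E →L⋆[𝕜] E →L[𝕜] 𝕜) :
    ∃ S : E →L[𝕜] E, ‖S‖ ≤ ‖B‖ ∧ ∀ x y, ⟪y, S x⟫_𝕜 = B y x := by
  refine ⟨ContinuousLinearMap.adjoint (InnerProductSpace.continuousLinearMapOfBilin B), ?_,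
    fun x y => by simp [ContinuousLinearMap.adjoint_inner_right]⟩
  rw [LinearIsometryEquiv.norm_map]
  exact (ContinuousLinearMap.opNorm_comp_le _ _).trans
    (mul_le_of_le_one_left (norm_nonneg _) (LinearIsometry.norm_toContinuousLinearMap_le _))

namespace ContinuousLinearMapWOT

theorem exists_le_nhds_of_tendsto_inner {F : Filter (E →WOT[𝕜] E)} [F.NeBot] {c : E → E → 𝕜}
    {r : ℝ} (hr : 0 ≤ r) (hc_le : ∀ x y, ‖c x y‖ ≤ r * ‖y‖ * ‖x‖)
    (hc : ∀ x y, Tendsto (fun T : E →WOT[𝕜] E => ⟪y, T x⟫_𝕜) F (𝓝 (c x y))) :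
    ∃ S : E →L[𝕜] E, ‖S‖ ≤ r ∧ F ≤ 𝓝 (ofCLM S) := by
  have hc_unique {x y} {f : (E →WOT[𝕜] E) → 𝕜} {a : 𝕜}
      (hf : ∀ T : E →WOT[𝕜] E, ⟪y, T x⟫_𝕜 = f T) (ha : Tendsto f F (𝓝 a)) : c x y = a :=
    tendsto_nhds_unique ((hc x y).congr hf) ha
  let B : E →L⋆[𝕜] E →L[𝕜] 𝕜 := LinearMap.mkContinuous₂
    (LinearMap.mk₂'ₛₗ (starRingEnd 𝕜) (RingHom.id 𝕜) (fun y x => c x y)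
      (fun y y' x => hc_unique (fun T => inner_add_left ..) ((hc x y).add (hc x y')))
      (fun a y x => hc_unique (fun T => inner_smul_left ..) ((hc x y).const_mul _))
      (fun y x x' => hc_unique (fun T => by rw [map_add, inner_add_right])
        ((hc x y).add (hc x' y)))
      (fun a y x => hc_unique (fun T => by rw [map_smul, inner_smul_right]; rfl)
        ((hc x y).const_mul _))) r
    (fun y x => hc_le x y)
  obtain ⟨S, hS_norm, hS⟩ := InnerProductSpace.exists_inner_apply_eq_sesqForm B
  refine ⟨S, hS_norm.trans (LinearMap.mkContinuous₂_norm_le _ hr _),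
    le_nhds_iff_forall_inner_apply_le_nhds.2 fun x y => ?_⟩
  rw [ofCLM_apply, hS]
  exact hc x y

theorem isCompact_ofCLM_closedBall (r : ℝ) :
    IsCompact (ofCLM '' Metric.closedBall (0 : E →L[𝕜] E) r) := by
  refine isCompact_iff_ultrafilter_le_nhds.2 fun U hU => ?_
  have hr : 0 ≤ r := by
    obtain ⟨_, T, hT, -⟩ := U.nonempty_of_mem (le_principal_iff.1 hU)
    exact (norm_nonneg T).trans (mem_closedBall_zero_iff.1 hT)
  have hbound : ∀ x y, ∀ T ∈ ofCLM '' Metric.closedBall (0 : E →L[𝕜] E) r,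
      ⟪y, T x⟫_𝕜 ∈ Metric.closedBall (0 : 𝕜) (r * ‖y‖ * ‖x‖) := by
    rintro x y _ ⟨T, hT, rfl⟩
    rw [mem_closedBall_zero_iff] at hT ⊢
    calc ‖⟪y, T x⟫_𝕜‖ ≤ ‖y‖ * (‖T‖ * ‖x‖) :=
          (norm_inner_le_norm y (T x)).trans (by gcongr; exact T.le_opNorm x)
      _ ≤ r * ‖y‖ * ‖x‖ := by rw [mul_left_comm, ← mul_assoc]; gcongr
  have hlim : ∀ x y, ∃ c ∈ Metric.closedBall (0 : 𝕜) (r * ‖y‖ * ‖x‖),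
      Tendsto (fun T : E →WOT[𝕜] E => ⟪y, T x⟫_𝕜) U (𝓝 c) := fun x y =>
    (isCompact_closedBall _ _).ultrafilter_le_nhds (U.map _)
      (tendsto_principal_principal.2 (hbound x y) |>.mono_left hU)
  choose c hc_mem hc_lim using hlim
  obtain ⟨S, hS_norm, hS⟩ := exists_le_nhds_of_tendsto_inner hr
    (fun x y => mem_closedBall_zero_iff.1 (hc_mem x y)) hc_lim
  exact ⟨ofCLM S, ⟨S, mem_closedBall_zero_iff.2 hS_norm, rfl⟩, hS⟩

theorem isClosed_setOf_isPositive : IsClosed {T : E →WOT[𝕜] E | T.toCLM.IsPositive} := by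
  have hcont : ∀ x y, Continuous fun T : E →WOT[𝕜] E => ⟪y, T x⟫_𝕜 :=
    continuous_inner_apply continuous_id
  have hcont' : ∀ x y, Continuous fun T : E →WOT[𝕜] E => ⟪T x, y⟫_𝕜 := fun x y => by
    simp_rw [← inner_conj_symm (𝕜 := 𝕜) _ y]
    exact RCLike.continuous_conj.comp (hcont x y)
  simp only [ContinuousLinearMap.isPositive_iff, LinearMap.IsSymmetric, Set.ofPred_and,
    Set.ofPred_forall]
  exact (isClosed_iInter fun x => isClosed_iInter fun y =>
    isClosed_eq (hcont' _ _) (hcont _ _)).inter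
    (isClosed_iInter fun x => isClosed_le continuous_const (hcont' _ _))

end ContinuousLinearMapWOT

end WOT

open ContinuousLinearMapWOT (ofCLM toCLM_sum toCLM_smul toCLM_injective isClosed_setOf_toCLM_eq
  isClosed_setOf_isPositive isCompact_ofCLM_closedBall)

theorem isCompact_setOf_isMarkov (Ω₁ Ω₂ : Type*) [Fintype Ω₁] :
    IsCompact {p : Ω₁ → Ω₂ → ℝ | IsMarkov p} := by
  have hclosed : IsClosed {p : Ω₁ → Ω₂ → ℝ | IsMarkov p} := by
    simp only [IsMarkov, Set.ofPred_and, Set.ofPred_forall]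
    exact (isClosed_iInter fun x => isClosed_iInter fun y =>
      isClosed_le continuous_const (by fun_prop)).inter
      (isClosed_iInter fun y => isClosed_eq (by fun_prop) continuous_const)
  refine (isCompact_univ_pi fun _ => isCompact_univ_pi fun _ =>
    isCompact_Icc (a := (0 : ℝ)) (b := 1)).of_isClosed_subset hclosed fun p hp x _ y _ =>
      ⟨hp.1 x y, hp.2 y ▸ Finset.single_le_sum (fun x' _ => hp.1 x' y) (Finset.mem_univ x)⟩

theorem IsObservable.norm_le_one {Ω : Type*} [Fintype Ω] {A : Ω → H →L[ℂ] H}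
    (hA : IsObservable A) (x : Ω) : ‖A x‖ ≤ 1 := by
  have h0 : 0 ≤ A x := (ContinuousLinearMap.nonneg_iff_isPositive _).2 (hA.1 x)
  have h1 : A x ≤ 1 := hA.2 ▸ Finset.single_le_sum
    (fun y _ => (ContinuousLinearMap.nonneg_iff_isPositive (A y)).2 (hA.1 y)) (Finset.mem_univ x)
  exact (CStarAlgebra.norm_le_norm_of_nonneg_of_le h0 h1).trans ContinuousLinearMap.norm_id_le

omit [CompleteSpace H] in
theorem isClosed_setOf_pp (Ω₁ Ω₂ : Type*) [Fintype Ω₁] [Fintype Ω₂] :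
    IsClosed {XY : (Ω₁ → H →WOT[ℂ] H) × (Ω₂ → H →WOT[ℂ] H) |
      PP (fun x => (XY.1 x).toCLM) fun y => (XY.2 y).toCLM} := by
  have : CompactSpace {p : Ω₁ → Ω₂ → ℝ // IsMarkov p} :=
    isCompact_iff_compactSpace.1 (isCompact_setOf_isMarkov Ω₁ Ω₂)
  have hC : IsClosed {pXY : {p : Ω₁ → Ω₂ → ℝ // IsMarkov p} × (Ω₁ → H →WOT[ℂ] H) ×
      (Ω₂ → H →WOT[ℂ] H) | ∀ x, pXY.2.1 x = ∑ y, (pXY.1.1 x y : ℂ) • pXY.2.2 y} := by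
    have hp : ∀ x y, Continuous fun pXY : {p : Ω₁ → Ω₂ → ℝ // IsMarkov p} ×
        (Ω₁ → H →WOT[ℂ] H) × (Ω₂ → H →WOT[ℂ] H) => pXY.1.1 x y := fun x y =>
      (continuous_apply_apply x y).comp (continuous_subtype_val.comp continuous_fst)
    simp only [Set.ofPred_forall]
    exact isClosed_iInter fun x => isClosed_eq
      ((continuous_apply x).comp (continuous_fst.comp continuous_snd))
      (continuous_finsetSum _ fun y _ => (Complex.continuous_ofReal.comp (hp x y)).smul
        ((continuous_apply y).comp (continuous_snd.comp continuous_snd)))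
  convert isClosedMap_snd_of_compactSpace _ hC using 1
  ext ⟨X, Y⟩
  simp only [Set.mem_ofPred_eq, PP, pproc, funext_iff, ← toCLM_smul,
    ← toCLM_sum, toCLM_injective.eq_iff]
  constructor
  · rintro ⟨p, hp, h⟩
    exact ⟨(⟨p, hp⟩, X, Y), h, rfl⟩
  · rintro ⟨⟨⟨p, hp⟩, XY⟩, h, rfl : XY = _⟩
    exact ⟨p, hp, h⟩

section Joint

variable {n : ℕ} {Ω : Fin n → Type*} [∀ ℓ, Fintype (Ω ℓ)] [∀ ℓ, DecidableEq (Ω ℓ)]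

theorem isClosed_setOf_isJoint (A : ∀ ℓ, Ω ℓ → H →L[ℂ] H) :
    IsClosed {G : (∀ ℓ, Ω ℓ) → H →WOT[ℂ] H | IsJoint A fun x => (G x).toCLM} := by
  have hmarg : ∀ (G : (∀ ℓ, Ω ℓ) → H →WOT[ℂ] H) ℓ xℓ,
      (∑ x : ∀ ℓ, Ω ℓ, if x ℓ = xℓ then (G x).toCLM else 0) =
        (∑ x : ∀ ℓ, Ω ℓ, if x ℓ = xℓ then G x else 0).toCLM := by
    intro G ℓ xℓ
    rw [toCLM_sum]
    congr with x
    split_ifs <;> rfl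
  have hite : ∀ ℓ xℓ (x : ∀ ℓ, Ω ℓ),
      Continuous fun G : (∀ ℓ, Ω ℓ) → H →WOT[ℂ] H => if x ℓ = xℓ then G x else 0 := by
    intro ℓ xℓ x
    split_ifs
    exacts [continuous_apply x, continuous_const]
  simp only [IsJoint, IsObservable, ← toCLM_sum, hmarg, Set.ofPred_and, Set.ofPred_forall]
  refine ((isClosed_iInter fun x => isClosed_setOf_isPositive.preimage
    (continuous_apply x)).inter (isClosed_setOf_toCLM_eq
      (continuous_finsetSum _ fun x _ => continuous_apply x) 1)).inter
    (isClosed_iInter fun ℓ => isClosed_iInter fun xℓ => isClosed_setOf_toCLM_eq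
      (continuous_finsetSum _ fun x _ => hite ℓ xℓ x) _)

theorem isCompact_setOf_isJoint (A : ∀ ℓ, Ω ℓ → H →L[ℂ] H) :
    IsCompact {G : (∀ ℓ, Ω ℓ) → H →WOT[ℂ] H | IsJoint A fun x => (G x).toCLM} :=
  (isCompact_univ_pi fun _ => isCompact_ofCLM_closedBall 1).of_isClosed_subset
    (isClosed_setOf_isJoint A) fun G hG x _ =>
      ⟨(G x).toCLM, mem_closedBall_zero_iff.2 (hG.1.norm_le_one x), rfl⟩

end Joint

/-- A monotonically increasing net of joint observables has an upper bound among the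
joint observables, which lower bounds every common upper bound. -/
theorem increasing_net_joint {n : ℕ} {Ω : Fin n → Type*}
    [∀ ℓ, Fintype (Ω ℓ)] [∀ ℓ, DecidableEq (Ω ℓ)]
    {Λ : Type*} [Preorder Λ] [Nonempty Λ]
    (hdir : ∀ a b : Λ, ∃ c, a ≤ c ∧ b ≤ c)
    (A : ∀ ℓ, Ω ℓ → H →L[ℂ] H)
    (G : Λ → ((∀ ℓ, Ω ℓ) → H →L[ℂ] H))
    (hGj : ∀ l, IsJoint A (G l))
    (hmono : ∀ l l', l ≤ l' → PP (G l) (G l')) :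
    ∃ Gt : (∀ ℓ, Ω ℓ) → H →L[ℂ] H, IsJoint A Gt ∧ (∀ l, PP (G l) Gt) ∧
      ∀ (Ω' : Type) [Fintype Ω'], ∀ B : Ω' → H →L[ℂ] H, IsObservable B →
        (∀ l, PP (G l) B) → PP Gt B := by
  have : IsDirected Λ (· ≤ ·) := ⟨hdir⟩
  let U : Ultrafilter Λ := .of atTop
  let Gwot : Λ → (∀ ℓ, Ω ℓ) → H →WOT[ℂ] H := fun l x => ofCLM (G l x)
  obtain ⟨Gt, hGt, hlim⟩ := (isCompact_setOf_isJoint A).ultrafilter_le_nhds (U.map Gwot)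
    (tendsto_principal.2 (Eventually.of_forall hGj))
  replace hlim : Tendsto Gwot U (𝓝 Gt) := hlim
  have hU : ∀ l, ∀ᶠ l' in (U : Filter Λ), l ≤ l' := fun l =>
    Ultrafilter.of_le atTop (eventually_ge_atTop l)
  refine ⟨fun x => (Gt x).toCLM, hGt, fun l => ?_, fun Ω' _ B _ hB => ?_⟩
  · exact (isClosed_setOf_pp _ _).mem_of_tendsto (tendsto_const_nhds.prodMk_nhds hlim)
      ((hU l).mono (hmono l))
  · exact (isClosed_setOf_pp _ _).mem_of_tendsto
      (hlim.prodMk_nhds (tendsto_const_nhds (x := fun y => ofCLM (B y)))) (Eventually.of_forall hB)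
end
end

section
/- Let A₁,…,Aₙ be compatible observables and G a joint observable on Ω̃ = Ω₁×⋯×Ωₙ. Then G is a minimal joint observable if and only if for every Markov kernel p ∈ K_G (i.e. p∗G is again a joint observable) and all x⃗₁, x⃗₂, x⃗' ∈ Ω̃: if G(x⃗₁) and G(x⃗₂) are linearly independent operators, then p(x⃗', x⃗₁)·p(x⃗', x⃗₂) = 0. -/
noncomputable section

open scoped BigOperators

variable {H : Type*} [NormedAddCommGroup H] [InnerProductSpace ℂ H] [CompleteSpace H]

/-!
If `G` is minimal and `p ∗ G` is joint, then `G = q ∗ (p ∗ G)` for some kernel `q`, so for every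
vector `v` the weights `y ↦ re ⟪G y v, v⟫` form an invariant measure of the Markov kernel
`r = q ∘ p`. Two outcomes that `p` mixes into `x'` both move under `r` to any `x` with
`q x x' > 0`. Invariant measures vanish on transient states and are proportional on two states
one of which reaches the other, so the quadratic forms of `G x₁` and `G x₂` are proportional,
which makes the two effects linearly dependent.

Conversely, if `p` never mixes independent effects, the positive effects merged into each
`(p ∗ G) x'` are nonnegative multiples of one another, so redistributing `(p ∗ G) x'` in
proportion to their norms (the Bayesian inverse of `p` for the prior `‖G ·‖`) recovers `G`.
-/

namespace FiniteKernel

variable {S : Type*} [Fintype S] {r : S → S → ℝ} {g h : S → ℝ}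

def IsInvariant (r : S → S → ℝ) (g : S → ℝ) : Prop :=
  ∀ z, ∑ y, r z y * g y = g z

/-- The chain of `r` jumps from `y` to `z` with probability `r z y`. -/
def Reaches (r : S → S → ℝ) : S → S → Prop :=
  Relation.ReflTransGen fun y z => 0 < r z y

lemma IsInvariant.sub (hg : IsInvariant r g) (hh : IsInvariant r h) :
    IsInvariant r (g - h) := fun z => by
  simp only [Pi.sub_apply, mul_sub, Finset.sum_sub_distrib, hg z, hh z]

lemma IsInvariant.const_smul (hg : IsInvariant r g) (c : ℝ) : IsInvariant r (c • g) := fun z => by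
  simp only [Pi.smul_apply, smul_eq_mul, mul_left_comm _ c, ← Finset.mul_sum, hg z]

/-- `r` can only lower `g ⊓ h` pointwise, but it preserves total mass. -/
lemma IsInvariant.inf (hr : IsMarkov r) (hg : IsInvariant r g) (hh : IsInvariant r h) :
    IsInvariant r (g ⊓ h) := by
  have hle (z : S) : ∑ y, r z y * (g ⊓ h) y ≤ (g ⊓ h) z := by
    refine le_inf ((Finset.sum_le_sum fun y _ => ?_).trans_eq (hg z))
      ((Finset.sum_le_sum fun y _ => ?_).trans_eq (hh z))
    · exact mul_le_mul_of_nonneg_left inf_le_left (hr.1 z y)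
    · exact mul_le_mul_of_nonneg_left inf_le_right (hr.1 z y)
  have hmass : ∑ z, ∑ y, r z y * (g ⊓ h) y = ∑ z, (g ⊓ h) z := by
    rw [Finset.sum_comm]
    simp only [← Finset.sum_mul, hr.2, one_mul]
  exact fun z => (Finset.sum_eq_sum_iff_of_le fun z _ => hle z).mp hmass z (Finset.mem_univ z)

lemma IsInvariant.eq_zero_of_reaches (hr : ∀ z y, 0 ≤ r z y) (hg0 : 0 ≤ g)
    (hg : IsInvariant r g) {y z : S} (hyz : Reaches r y z) (hz : g z = 0) : g y = 0 := by
  induction hyz using Relation.ReflTransGen.head_induction_on with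
  | refl => exact hz
  | @head a b hab _ ihb =>
    have hle : r b a * g a ≤ g b :=
      (Finset.single_le_sum (fun y _ => mul_nonneg (hr b y) (hg0 y)) (Finset.mem_univ a)).trans_eq
        (hg b)
    rw [ihb] at hle
    exact le_antisymm (nonpos_of_mul_nonpos_right hle hab) (hg0 a)

/-- The set `C`, which the chain never leaves, keeps all of its invariant mass, so no mass can flow
into it from `y`. -/
lemma IsInvariant.eq_zero_of_mem_closed (hr : IsMarkov r) (hg0 : 0 ≤ g) (hg : IsInvariant r g)
    {C : Finset S} (hC : ∀ z ∈ C, ∀ w, 0 < r w z → w ∈ C) {x y : S} (hx : x ∈ C) (hy : y ∉ C)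
    (hxy : 0 < r x y) : g y = 0 := by
  classical
  set m : S → ℝ := fun y => ∑ z ∈ C, r z y
  have hm : ∀ z ∈ C, m z = 1 := fun z hz => by
    rw [← hr.2 z]
    refine Finset.sum_subset (Finset.subset_univ C) fun w _ hw => ?_
    exact ((hr.1 w z).lt_or_eq.resolve_left fun hwz => hw (hC z hz w hwz)).symm
  have hmass : ∑ y, m y * g y = ∑ z ∈ C, g z := by
    simp only [m, Finset.sum_mul]
    rw [Finset.sum_comm]
    exact Finset.sum_congr rfl fun z _ => hg z
  have hmy : 0 < m y := hxy.trans_le (Finset.single_le_sum (fun z _ => hr.1 z y) hx)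
  have hle : m y * g y + ∑ z ∈ C, g z ≤ ∑ z ∈ C, g z := by
    calc m y * g y + ∑ z ∈ C, g z = ∑ z ∈ insert y C, m z * g z := by
          rw [Finset.sum_insert hy]
          exact congrArg _ (Finset.sum_congr rfl fun z hz => by rw [hm z hz, one_mul])
      _ ≤ ∑ z, m z * g z := Finset.sum_le_univ_sum_of_nonneg fun z =>
          mul_nonneg (Finset.sum_nonneg fun w _ => hr.1 w z) (hg0 z)
      _ = ∑ z ∈ C, g z := hmass
  exact le_antisymm (nonpos_of_mul_nonpos_right (by linarith) hmy) (hg0 y)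

lemma IsInvariant.eq_zero_of_not_reaches (hr : IsMarkov r) (hg0 : 0 ≤ g) (hg : IsInvariant r g)
    {x y : S} (hxy : 0 < r x y) (hyx : ¬ Reaches r x y) : g y = 0 := by
  classical
  refine hg.eq_zero_of_mem_closed hr hg0 (C := Finset.univ.filter (Reaches r x)) ?_
    (Finset.mem_filter.mpr ⟨Finset.mem_univ x, .refl⟩) (by simpa using hyx) hxy
  simp only [Finset.mem_filter, Finset.mem_univ, true_and]
  exact fun z hz w hw => hz.tail hw

lemma IsInvariant.mul_eq_mul_of_reaches (hr : IsMarkov r) (hh0 : 0 ≤ h) (hg : IsInvariant r g)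
    (hh : IsInvariant r h) {x y : S} (hyx : Reaches r y x) : g x * h y = g y * h x := by
  by_cases hx : h x = 0
  · simp [hx, hh.eq_zero_of_reaches hr.1 hh0 hyx hx]
  set t := g x / h x
  have hth : IsInvariant r (t • h) := hh.const_smul t
  have hm := hg.inf hr hth
  have htx : (t • h) x = g x := div_mul_cancel₀ _ hx
  -- both `g` and `t • h` dominate their infimum, with equality at `x`, hence at `y`
  have heq (f : S → ℝ) (hf : IsInvariant r f) (hle : g ⊓ t • h ≤ f)
      (hfx : f x = (g ⊓ t • h) x) : f y = (g ⊓ t • h) y :=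
    sub_eq_zero.mp <| (hf.sub hm).eq_zero_of_reaches hr.1 (sub_nonneg.mpr hle) hyx
      (sub_eq_zero.mpr hfx)
  have hgy : g y = t * h y :=
    (heq g hg inf_le_left (by simp [htx])).trans (heq _ hth inf_le_right (by simp [htx])).symm
  rw [hgy, div_mul_eq_mul_div, div_mul_cancel₀ _ hx]

/-- A state that reaches `x` but is not reached back is transient and carries no invariant mass;
otherwise `x₂` reaches `x₁` through `x`. -/
lemma IsInvariant.mul_eq_mul_of_common_succ (hr : IsMarkov r) (hg0 : 0 ≤ g) (hh0 : 0 ≤ h)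
    (hg : IsInvariant r g) (hh : IsInvariant r h) {x x₁ x₂ : S} (h₁ : 0 < r x x₁)
    (h₂ : 0 < r x x₂) : g x₁ * h x₂ = g x₂ * h x₁ := by
  by_cases hx : Reaches r x x₁
  · exact hg.mul_eq_mul_of_reaches hr hh0 hh (Relation.ReflTransGen.head h₂ hx)
  · simp [hg.eq_zero_of_not_reaches hr hg0 h₁ hx, hh.eq_zero_of_not_reaches hr hh0 h₁ hx]

end FiniteKernel

section QuadraticForm

variable {𝕜 E : Type*} [RCLike 𝕜] [NormedAddCommGroup E] [InnerProductSpace 𝕜 E]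

open ContinuousLinearMap
open scoped ComplexOrder

lemma ContinuousLinearMap.eq_zero_of_reApplyInnerSelf {T : E →L[𝕜] E}
    (hT : T.IsSymmetric) (h : ∀ v, T.reApplyInnerSelf v = 0) : T = 0 := by
  refine coe_injective (hT.inner_map_self_eq_zero.mp fun v => ?_)
  simpa [h v] using (hT.coe_reApplyInnerSelf_apply v).symm

lemma not_linearIndependent_of_reApplyInnerSelf_mul_eq_mul {T U : E →L[𝕜] E}
    (hT : T.IsSymmetric) (hU : U.IsSymmetric)
    (h : ∀ v w, T.reApplyInnerSelf v * U.reApplyInnerSelf w =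
      U.reApplyInnerSelf v * T.reApplyInnerSelf w) :
    ¬ LinearIndependent 𝕜 ![T, U] := by
  intro hTU
  by_cases hT0 : ∀ w, T.reApplyInnerSelf w = 0
  · exact hTU.ne_zero 0 (eq_zero_of_reApplyInnerSelf hT hT0)
  push Not at hT0
  obtain ⟨w, hw⟩ := hT0
  have hsymm : ((-U.reApplyInnerSelf w : 𝕜) • T + (T.reApplyInnerSelf w : 𝕜) • U).IsSymmetric :=
    (hT.smul (by simp)).add (hU.smul (by simp))
  have hcomb : (-U.reApplyInnerSelf w : 𝕜) • T + (T.reApplyInnerSelf w : 𝕜) • U = 0 := by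
    refine eq_zero_of_reApplyInnerSelf hsymm fun v => ?_
    have hvw := h v w
    simp only [reApplyInnerSelf_apply, add_apply, smul_apply, inner_add_left, inner_smul_left,
      map_add, RCLike.conj_ofReal, map_neg, RCLike.re_ofReal_mul, neg_mul] at hvw ⊢
    linarith
  exact hw (by exact_mod_cast (LinearIndependent.pair_iff.mp hTU _ _ hcomb).2)

lemma ContinuousLinearMap.IsPositive.norm_smul_eq_of_not_linearIndependent {T U : E →L[𝕜] E}
    (hT : T.IsPositive) (hU : U.IsPositive) (hTU : ¬ LinearIndependent 𝕜 ![T, U]) :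
    (‖T‖ : 𝕜) • U = (‖U‖ : 𝕜) • T := by
  by_cases hT0 : T = 0
  · simp [hT0]
  obtain ⟨c, rfl⟩ : ∃ c : 𝕜, c • T = U := by
    simpa [LinearIndependent.pair_iff' hT0] using hTU
  have hc : 0 ≤ c :=
    (hT.toLinearMap.isPositive_smul_iff fun h => hT0 (coe_injective h)).mp hU.toLinearMap
  rw [norm_smul, smul_smul, RCLike.ofReal_mul, RCLike.norm_of_nonneg' hc, mul_comm]

end QuadraticForm

section Postprocessing

variable {E : Type*} [NormedAddCommGroup E] [InnerProductSpace ℂ E]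
variable {Ω₁ Ω₂ Ω₃ : Type*} [Fintype Ω₂]

def kcomp (q : Ω₁ → Ω₂ → ℝ) (p : Ω₂ → Ω₃ → ℝ) : Ω₁ → Ω₃ → ℝ :=
  fun x z => ∑ y, q x y * p y z

lemma IsMarkov.kcomp [Fintype Ω₁] {q : Ω₁ → Ω₂ → ℝ} {p : Ω₂ → Ω₃ → ℝ} (hq : IsMarkov q)
    (hp : IsMarkov p) : IsMarkov (kcomp q p) := by
  refine ⟨fun x z => Finset.sum_nonneg fun y _ => mul_nonneg (hq.1 x y) (hp.1 y z), fun z => ?_⟩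
  change ∑ x, ∑ y, q x y * p y z = 1
  rw [Finset.sum_comm]
  simp only [← Finset.sum_mul, hq.2, one_mul, hp.2]

lemma kcomp_pos {q : Ω₁ → Ω₂ → ℝ} {p : Ω₂ → Ω₃ → ℝ} (hq : ∀ x y, 0 ≤ q x y)
    (hp : ∀ y z, 0 ≤ p y z) {x : Ω₁} {y : Ω₂} {z : Ω₃} (hxy : 0 < q x y) (hyz : 0 < p y z) :
    0 < kcomp q p x z :=
  (mul_pos hxy hyz).trans_le <| Finset.single_le_sum (f := fun y => q x y * p y z)
    (fun y _ => mul_nonneg (hq x y) (hp y z)) (Finset.mem_univ y)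

lemma pproc_pproc [Fintype Ω₃] (q : Ω₁ → Ω₂ → ℝ) (p : Ω₂ → Ω₃ → ℝ) (A : Ω₃ → E →L[ℂ] E) :
    pproc q (pproc p A) = pproc (kcomp q p) A := by
  funext x
  simp only [pproc, kcomp, Finset.smul_sum, smul_smul, Complex.ofReal_sum, Finset.sum_smul,
    Complex.ofReal_mul]
  exact Finset.sum_comm

lemma reApplyInnerSelf_pproc (p : Ω₁ → Ω₂ → ℝ) (A : Ω₂ → E →L[ℂ] E) (x : Ω₁) (v : E) :
    (pproc p A x).reApplyInnerSelf v = ∑ y, p x y * (A y).reApplyInnerSelf v := by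
  simp only [pproc, ContinuousLinearMap.reApplyInnerSelf_apply, FunLike.coe_sum,
    Finset.sum_apply, FunLike.coe_smul, Pi.smul_apply, sum_inner, inner_smul_left,
    Complex.conj_ofReal, map_sum]
  exact Finset.sum_congr rfl fun y _ => Complex.re_ofReal_mul _ _

/-- The Bayesian inverse of `p` for the prior weights `w`; columns on which `p` sees no weight are
filled with the uniform distribution. -/
def bayesInv (p : Ω₁ → Ω₂ → ℝ) (w : Ω₂ → ℝ) : Ω₂ → Ω₁ → ℝ := fun y x =>
  if ∑ y', p x y' * w y' = 0 then (Fintype.card Ω₂ : ℝ)⁻¹ else p x y * w y / ∑ y', p x y' * w y'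

lemma isMarkov_bayesInv [Nonempty Ω₂] {p : Ω₁ → Ω₂ → ℝ} {w : Ω₂ → ℝ} (hp : ∀ x y, 0 ≤ p x y)
    (hw : 0 ≤ w) : IsMarkov (bayesInv p w) := by
  refine ⟨fun y x => ?_, fun x => ?_⟩
  · unfold bayesInv
    split_ifs
    · positivity
    · exact div_nonneg (mul_nonneg (hp x y) (hw y))
        (Finset.sum_nonneg fun y' _ => mul_nonneg (hp x y') (hw y'))
  · unfold bayesInv
    split_ifs with h
    · simp [Finset.card_univ]
    · rw [← Finset.sum_div, div_self h]

lemma norm_smul_pproc {p : Ω₁ → Ω₂ → ℝ} (hp : ∀ x y, 0 ≤ p x y) {A : Ω₂ → E →L[ℂ] E}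
    (hA : ∀ x y y', 0 < p x y → 0 < p x y' → (‖A y‖ : ℂ) • A y' = (‖A y'‖ : ℂ) • A y)
    {x : Ω₁} {y : Ω₂} (hxy : 0 < p x y) :
    (‖A y‖ : ℂ) • pproc p A x = ((∑ y', p x y' * ‖A y'‖ : ℝ) : ℂ) • A y := by
  simp only [pproc, Finset.smul_sum, Complex.ofReal_sum, Finset.sum_smul]
  refine Finset.sum_congr rfl fun y' _ => ?_
  rcases (hp x y').eq_or_lt with h | h
  · simp [← h]
  · rw [smul_comm, hA x y y' hxy h, smul_smul, Complex.ofReal_mul]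

lemma pproc_bayesInv_pproc [Fintype Ω₁] {p : Ω₁ → Ω₂ → ℝ} (hp : IsMarkov p)
    {A : Ω₂ → E →L[ℂ] E}
    (hA : ∀ x y y', 0 < p x y → 0 < p x y' → (‖A y‖ : ℂ) • A y' = (‖A y'‖ : ℂ) • A y) :
    pproc (bayesInv p (‖A ·‖)) (pproc p A) = A := by
  funext y
  have hterm (x : Ω₁) : (bayesInv p (‖A ·‖) y x : ℂ) • pproc p A x = (p x y : ℂ) • A y := by
    by_cases hν : ∑ y', p x y' * ‖A y'‖ = 0
    · have hzero (y' : Ω₂) : (p x y' : ℂ) • A y' = 0 := by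
        rcases mul_eq_zero.mp ((Finset.sum_eq_zero_iff_of_nonneg fun y' _ =>
          mul_nonneg (hp.1 x y') (norm_nonneg _)).mp hν y' (Finset.mem_univ y')) with h | h
        · simp [h]
        · simp [norm_eq_zero.mp h]
      simp only [pproc, hzero, Finset.sum_const_zero, smul_zero]
    rcases (hp.1 x y).eq_or_lt with hxy | hxy
    · simp [bayesInv, hν, ← hxy]
    rw [bayesInv, if_neg hν, div_eq_mul_inv, mul_right_comm, Complex.ofReal_mul,
      Complex.ofReal_mul, mul_smul, norm_smul_pproc hp.1 hA hxy, smul_smul, mul_assoc,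
      ← Complex.ofReal_mul, inv_mul_cancel₀ hν, Complex.ofReal_one, mul_one]
  change ∑ x, (bayesInv p (‖A ·‖) y x : ℂ) • pproc p A x = A y
  rw [Finset.sum_congr rfl fun x _ => hterm x, ← Finset.sum_smul, ← Complex.ofReal_sum, hp.2 y,
    Complex.ofReal_one, one_smul]

end Postprocessing

/-- A joint observable `G` is minimal iff no kernel in `K_G` mixes two linearly
independent effects of `G`. -/
theorem minimal_iff_no_mixing {n : ℕ} {Ω : Fin n → Type*}
    [∀ ℓ, Fintype (Ω ℓ)] [∀ ℓ, DecidableEq (Ω ℓ)]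
    (A : ∀ ℓ, Ω ℓ → H →L[ℂ] H) (G : (∀ ℓ, Ω ℓ) → H →L[ℂ] H)
    (hG : IsJoint A G) :
    (∀ G' : (∀ ℓ, Ω ℓ) → H →L[ℂ] H, IsJoint A G' → PP G' G → PP G G') ↔
    ∀ p : (∀ ℓ, Ω ℓ) → (∀ ℓ, Ω ℓ) → ℝ, IsMarkov p → IsJoint A (pproc p G) →
      ∀ x1 x2 x' : ∀ ℓ, Ω ℓ, LinearIndependent ℂ ![G x1, G x2] →
        p x' x1 * p x' x2 = 0 := by
  have hGpos : ∀ x, (G x).IsPositive := hG.1.1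
  constructor
  · intro hmin p hp hpG x₁ x₂ x' hLI
    by_contra hmix
    obtain ⟨q, hq, hGq⟩ := hmin (pproc p G) hpG ⟨p, hp, rfl⟩
    rw [pproc_pproc] at hGq
    have hinv (v : H) : FiniteKernel.IsInvariant (kcomp q p) fun y => (G y).reApplyInnerSelf v :=
      fun z => by rw [← reApplyInnerSelf_pproc, ← hGq]
    obtain ⟨x, -, hx⟩ := Finset.exists_lt_of_sum_lt (s := Finset.univ) (f := 0) (g := (q · x'))
      (by simp [hq.2 x'])
    have hpos (y) (hy : p x' y ≠ 0) : 0 < kcomp q p x y :=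
      kcomp_pos hq.1 hp.1 hx ((hp.1 x' y).lt_of_ne' hy)
    refine not_linearIndependent_of_reApplyInnerSelf_mul_eq_mul (hGpos x₁).isSymmetric
      (hGpos x₂).isSymmetric (fun v w => ?_) hLI
    exact (hinv v).mul_eq_mul_of_common_succ (hq.kcomp hp) (fun y => (hGpos y).2 v)
      (fun y => (hGpos y).2 w) (hinv w) (hpos x₁ (left_ne_zero_of_mul hmix))
      (hpos x₂ (right_ne_zero_of_mul hmix))
  · rintro hmix G' hG' ⟨p, hp, rfl⟩
    cases isEmpty_or_nonempty (∀ ℓ, Ω ℓ)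
    · exact ⟨0, ⟨fun _ => isEmptyElim, isEmptyElim⟩, funext isEmptyElim⟩
    refine ⟨bayesInv p (‖G ·‖), isMarkov_bayesInv hp.1 fun _ => norm_nonneg _,
      (pproc_bayesInv_pproc hp fun x y y' hy hy' => ?_).symm⟩
    exact (hGpos y).norm_smul_eq_of_not_linearIndependent (hGpos y') fun hLI =>
      (mul_pos hy hy').ne' (hmix p hp hG' y y' x hLI)
end
end

section
/- Let G be a joint observable of compatible observables A₁,…,Aₙ on Ω̃ = Ω₁×⋯×Ωₙ, and let Ω̃₁ = { x⃗ ∈ Ω̃ : G(x⃗) ≠ 0 }. If the family (G(x⃗))_{x⃗∈Ω̃₁} is linearly independent in B(H), then G is a minimal joint observable: any joint observable G' of A₁,…,Aₙ with G' ⪯ G satisfies G' = G. -/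
noncomputable section

open scoped BigOperators

variable {H : Type*} [NormedAddCommGroup H] [InnerProductSpace ℂ H] [CompleteSpace H]

/-- If the nonzero effects of a joint observable `G` are linearly independent, then `G`
is a minimal joint observable. -/
theorem linearIndependent_nonzero_implies_minimal {n : ℕ} {Ω : Fin n → Type*}
    [∀ ℓ, Fintype (Ω ℓ)] [∀ ℓ, DecidableEq (Ω ℓ)]
    (A : ∀ ℓ, Ω ℓ → H →L[ℂ] H) (G : (∀ ℓ, Ω ℓ) → H →L[ℂ] H)
    (hG : IsJoint A G)
    (hli : LinearIndependent ℂ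
      (fun x : {x : ∀ ℓ, Ω ℓ // G x ≠ 0} => G (x : ∀ ℓ, Ω ℓ))) :
    ∀ G' : (∀ ℓ, Ω ℓ) → H →L[ℂ] H, IsJoint A G' → PP G' G → G' = G := by
  classical
  rintro G' hG' ⟨p, ⟨hp0, hp1⟩, rfl⟩
  have key : ∀ y, G y ≠ 0 → ∀ ℓ xℓ,
      (∑ x, (if x ℓ = xℓ then (p x y : ℂ) else 0)) = (if y ℓ = xℓ then 1 else 0) := by
    intro y hy ℓ xℓ
    have hm : (∑ x, if x ℓ = xℓ then pproc p G x else 0)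
        = ∑ x, if x ℓ = xℓ then G x else 0 := by
      rw [hG'.2 ℓ xℓ, hG.2 ℓ xℓ]
    have hL : (∑ x, if x ℓ = xℓ then pproc p G x else 0)
        = ∑ z, (∑ x, (if x ℓ = xℓ then (p x z : ℂ) else 0)) • G z := by
      calc (∑ x, if x ℓ = xℓ then pproc p G x else 0)
          = ∑ x, ∑ z, (if x ℓ = xℓ then (p x z : ℂ) else 0) • G z := by
            refine Finset.sum_congr rfl fun x _ => ?_
            simp only [pproc]
            split_ifs with h <;> simp
        _ = ∑ z, (∑ x, (if x ℓ = xℓ then (p x z : ℂ) else 0)) • G z := by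
            rw [Finset.sum_comm]
            simp [Finset.sum_smul]
    have hR : (∑ x, if x ℓ = xℓ then G x else 0)
        = ∑ z, (if z ℓ = xℓ then (1 : ℂ) else 0) • G z := by
      refine Finset.sum_congr rfl fun z _ => ?_
      split_ifs with h <;> simp
    set d : (∀ ℓ, Ω ℓ) → ℂ := fun z =>
      (∑ x, (if x ℓ = xℓ then (p x z : ℂ) else 0)) - (if z ℓ = xℓ then 1 else 0) with hd
    have hsum : ∑ z, d z • G z = 0 := by
      simp only [hd, sub_smul, Finset.sum_sub_distrib]
      rw [← hL, ← hR, hm, sub_self]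
    have hsub : ∑ i : {x : ∀ ℓ, Ω ℓ // G x ≠ 0}, d i.1 • G i.1 = ∑ z, d z • G z := by
      rw [← Finset.sum_subtype (Finset.univ.filter (fun z => G z ≠ 0))
        (fun x => by simp) (fun z => d z • G z)]
      exact Finset.sum_filter_of_ne (fun z _ h h0 => h (by rw [h0, smul_zero]))
    have := Fintype.linearIndependent_iff.1 hli (fun i => d i.1)
      (by rw [hsub, hsum]) ⟨y, hy⟩
    have hdy : d y = 0 := this
    simp only [hd] at hdy
    exact sub_eq_zero.mp hdy
  have keyR : ∀ y, G y ≠ 0 → ∀ ℓ xℓ,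
      (∑ x, (if x ℓ = xℓ then p x y else 0)) = (if y ℓ = xℓ then 1 else 0) := by
    intro y hy ℓ xℓ
    have h := key y hy ℓ xℓ
    rw [← Complex.ofReal_inj]
    push_cast [apply_ite (fun r : ℝ => (r : ℂ))]
    exact h
  have pzero : ∀ x y, G y ≠ 0 → x ≠ y → p x y = 0 := by
    intro x y hy hxy
    obtain ⟨ℓ, hℓ⟩ := Function.ne_iff.1 hxy
    have h := keyR y hy ℓ (x ℓ)
    rw [if_neg (fun h' => hℓ h'.symm)] at h
    have hterm := (Finset.sum_eq_zero_iff_of_nonneg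
      (fun z _ => by split_ifs with h'; exacts [hp0 z y, le_refl 0])).1 h x (Finset.mem_univ x)
    simpa using hterm
  have pone : ∀ x, G x ≠ 0 → p x x = 1 := by
    intro x hx
    have h := hp1 x
    rwa [Finset.sum_eq_single x (fun z _ hz => pzero z x hx hz)
      (fun h => absurd (Finset.mem_univ x) h)] at h
  funext x
  show ∑ y, (p x y : ℂ) • G y = G x
  rw [Finset.sum_eq_single x]
  · by_cases hx : G x = 0
    · simp [hx]
    · simp [pone x hx]
  · intro z _ hz
    by_cases hz0 : G z = 0
    · simp [hz0]
    · simp [pzero x z hz0 (Ne.symm hz)]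
  · intro h; exact absurd (Finset.mem_univ x) h
end
end

section
/- Let G be a joint observable of compatible observables A₁,…,Aₙ such that the full family (G(x⃗))_{x⃗∈Ω̃} is linearly independent. Then G is both minimal and maximal among joint observables: for any joint observable G', G' ⪯ G implies G' = G, and G ⪯ G' implies G' = G. -/
noncomputable section

open scoped BigOperators

variable {H : Type*} [NormedAddCommGroup H] [InnerProductSpace ℂ H] [CompleteSpace H]

/-- Key lemma: if a Markov kernel `p` on the joint outcome set preserves all marginals of a
linearly independent family `Q`, then `p` acts as the identity on `Q`. -/
lemma pproc_eq_self_of_marginals {n : ℕ} {Ω : Fin n → Type*}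
    [∀ ℓ, Fintype (Ω ℓ)] [∀ ℓ, DecidableEq (Ω ℓ)]
    (p : (∀ ℓ, Ω ℓ) → (∀ ℓ, Ω ℓ) → ℝ) (hp : IsMarkov p)
    (Q : (∀ ℓ, Ω ℓ) → H →L[ℂ] H) (hQ : LinearIndependent ℂ Q)
    (hmarg : ∀ ℓ (c : Ω ℓ),
      (∑ x : ∀ ℓ, Ω ℓ, if x ℓ = c then pproc p Q x else 0) =
      (∑ x : ∀ ℓ, Ω ℓ, if x ℓ = c then Q x else 0)) :
    pproc p Q = Q := by
  classical
  have hQ' := Fintype.linearIndependent_iff.mp hQ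
  have hcoef : ∀ ℓ (c : Ω ℓ) y, (∑ x : ∀ ℓ, Ω ℓ, if x ℓ = c then p x y else 0) =
      if y ℓ = c then (1 : ℝ) else 0 := by
    intro ℓ c y
    have h1 : (∑ x : ∀ ℓ, Ω ℓ, if x ℓ = c then pproc p Q x else 0) =
        ∑ z : ∀ ℓ, Ω ℓ,
          (((∑ x : ∀ ℓ, Ω ℓ, if x ℓ = c then p x z else 0 : ℝ) : ℂ)) • Q z := by
      have e1 : (∑ x : ∀ ℓ, Ω ℓ, if x ℓ = c then pproc p Q x else 0) =
          ∑ x : ∀ ℓ, Ω ℓ, ∑ z : ∀ ℓ, Ω ℓ,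
            (if x ℓ = c then (p x z : ℂ) else 0) • Q z := by
        refine Finset.sum_congr rfl fun x _ => ?_
        split_ifs with h
        · simp [pproc]
        · simp
      rw [e1, Finset.sum_comm]
      refine Finset.sum_congr rfl fun z _ => ?_
      rw [← Finset.sum_smul]
      congr 1
      rw [Complex.ofReal_sum]
      exact Finset.sum_congr rfl fun i _ => by split_ifs <;> simp
    have h2 : (∑ x : ∀ ℓ, Ω ℓ, if x ℓ = c then Q x else 0) =
        ∑ z : ∀ ℓ, Ω ℓ, (if z ℓ = c then (1 : ℂ) else 0) • Q z := by
      refine Finset.sum_congr rfl fun z _ => ?_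
      split_ifs <;> simp
    have h3 : ∑ z : ∀ ℓ, Ω ℓ,
        ((((∑ x : ∀ ℓ, Ω ℓ, if x ℓ = c then p x z else 0 : ℝ) : ℂ))
          - (if z ℓ = c then (1 : ℂ) else 0)) • Q z = 0 := by
      simp only [sub_smul, Finset.sum_sub_distrib]
      rw [← h1, ← h2, hmarg]
      simp
    have h4 := hQ' _ h3 y
    have h5 : (((∑ x : ∀ ℓ, Ω ℓ, if x ℓ = c then p x y else 0 : ℝ) : ℂ)) =
        (if y ℓ = c then (1 : ℂ) else 0) := by linear_combination h4
    have h6 : ((if y ℓ = c then (1 : ℝ) else 0 : ℝ) : ℂ) =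
        (if y ℓ = c then (1 : ℂ) else 0) := by split_ifs <;> simp
    exact_mod_cast h5.trans h6.symm
  have hzero : ∀ x y, x ≠ y → p x y = 0 := by
    intro x y hxy
    obtain ⟨ℓ, hℓ⟩ : ∃ ℓ, x ℓ ≠ y ℓ := by
      by_contra h; push_neg at h; exact hxy (funext h)
    have hc := hcoef ℓ (x ℓ) y
    rw [if_neg (fun h => hℓ h.symm)] at hc
    have hterm := (Finset.sum_eq_zero_iff_of_nonneg
      (fun z _ => by split_ifs with h; exacts [hp.1 z y, le_refl 0])).mp hc x (Finset.mem_univ x)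
    simpa using hterm
  have hdiag : ∀ y, p y y = 1 := by
    intro y
    have h := hp.2 y
    rwa [Finset.sum_eq_single y (fun x _ hx => hzero x y hx) (by simp)] at h
  funext x
  show ∑ y : ∀ ℓ, Ω ℓ, (p x y : ℂ) • Q y = Q x
  rw [Finset.sum_eq_single x (fun y _ hy => by rw [hzero x y (Ne.symm hy)]; simp)
    (fun h => absurd (Finset.mem_univ x) h)]
  rw [hdiag x]
  simp

/-- If all the effects of a joint observable `G` are linearly independent, then `G` is
both minimal and maximal among joint observables. -/
theorem linearIndependent_implies_minimal_and_maximal {n : ℕ} {Ω : Fin n → Type*}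
    [∀ ℓ, Fintype (Ω ℓ)] [∀ ℓ, DecidableEq (Ω ℓ)]
    (A : ∀ ℓ, Ω ℓ → H →L[ℂ] H) (G : (∀ ℓ, Ω ℓ) → H →L[ℂ] H)
    (hG : IsJoint A G) (hli : LinearIndependent ℂ G) :
    (∀ G' : (∀ ℓ, Ω ℓ) → H →L[ℂ] H, IsJoint A G' → PP G' G → G' = G) ∧
    (∀ G' : (∀ ℓ, Ω ℓ) → H →L[ℂ] H, IsJoint A G' → PP G G' → G' = G) := by
  classical
  constructor
  · rintro G' hG' ⟨p, hp, rfl⟩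
    exact pproc_eq_self_of_marginals p hp G hli
      (fun ℓ c => (hG'.2 ℓ c).trans (hG.2 ℓ c).symm)
  · rintro G' hG' ⟨p, hp, hpe⟩
    -- G' is linearly independent by a dimension count
    have hspan : ∀ x, G x ∈ Submodule.span ℂ (Set.range G') := by
      intro x
      rw [hpe]
      exact Submodule.sum_mem _ fun y _ =>
        Submodule.smul_mem _ _ (Submodule.subset_span (Set.mem_range_self y))
    haveI : Module.Finite ℂ (Submodule.span ℂ (Set.range G')) :=
      FiniteDimensional.span_of_finite ℂ (Set.finite_range G')
    have hle : Submodule.span ℂ (Set.range G) ≤ Submodule.span ℂ (Set.range G') := by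
      rw [Submodule.span_le]; rintro _ ⟨x, rfl⟩; exact hspan x
    have hcard : Fintype.card (∀ ℓ, Ω ℓ) = (Set.range G).finrank ℂ :=
      linearIndependent_iff_card_eq_finrank_span.mp hli
    have hli' : LinearIndependent ℂ G' := by
      rw [linearIndependent_iff_card_le_finrank_span]
      calc Fintype.card (∀ ℓ, Ω ℓ) = (Set.range G).finrank ℂ := hcard
        _ ≤ (Set.range G').finrank ℂ := Submodule.finrank_mono hle
    have := pproc_eq_self_of_marginals p hp G' hli'
      (fun ℓ c => by rw [← hpe]; exact (hG.2 ℓ c).trans (hG'.2 ℓ c).symm)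
    rw [hpe, this]
end
end

section
/- Let G be a pairwise linearly independent joint observable of compatible observables A₁,…,Aₙ (any two elements G(x⃗₁), G(x⃗₂) with x⃗₁ ≠ x⃗₂ are linearly independent). For each ℓ, let Cℓ(G) ⊆ ℝ^{Ωℓ×Ω̃} be the polyhedral cone of solutions u of: ∑_{x⃗} u(x'ℓ,x⃗) G(x⃗) = 0 for all x'ℓ; ∑_{x'ℓ} u(x'ℓ,x⃗) = 0 for all x⃗; u(x'ℓ,x⃗) ≤ 0 if x'ℓ = πℓ(x⃗) and u(x'ℓ,x⃗) ≥ 0 otherwise. Then G is a minimal joint observable if and only if Cℓ(G) = {0} for all ℓ = 1,…,n. -/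
/-!
(⇐) If `G' = pproc p G` is a joint observable of the same `Aℓ`, then the `ℓ`-marginal of `p`
minus the deterministic kernel of `πℓ` lies in `Cℓ(G)`. If all cones vanish, `p` preserves every
coordinate, so `p = 1` and `G' = G`.

(⇒) For `u ∈ Cℓ(G)` and small `ε > 0`, `δ_{πℓ} + ε u` is a Markov kernel; redrawing the `ℓ`-th
coordinate with it gives a joint observable `G' ⪯ G`, and minimality makes `G` a fixed point of a
Markov kernel `t = r p`. Fix a real functional `w` positive on every `G x` and write `w x` for
`w (G x)`. Then `w` is a stationary law of the row-stochastic kernel `t x z * w z / w x`, and for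
every real functional `h` the points `h (G x) / w x` have zero variance along its rows. So
`t x z > 0` forces `G z / w z = G x / w x`, which pairwise independence allows only for `z = x`.
Hence `t = 1`, every row of the resampling kernel `p` has a single support point, and `u = 0`.
-/

noncomputable section

open scoped BigOperators

variable {H : Type*} [NormedAddCommGroup H] [InnerProductSpace ℂ H] [CompleteSpace H]

section

open Finset Filter Topology

variable {E : Type*} [NormedAddCommGroup E] [InnerProductSpace ℂ E] {α β γ : Type*}

-- With `λ x z = t x z * w z / w x`, a row-stochastic kernel with stationary law `w`, the sum is
-- `∑ x, w x * Var_{λ x}(f / w)`.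
theorem sum_mul_div_sub_sq_eq_zero {ι : Type*} [Fintype ι] {t : ι → ι → ℝ} {w f : ι → ℝ}
    (hcol : ∀ z, ∑ x, t x z = 1) (hw : ∀ z, 0 < w z)
    (hw_fix : ∀ x, ∑ z, t x z * w z = w x) (hf_fix : ∀ x, ∑ z, t x z * f z = f x) :
    ∑ x, ∑ z, t x z * w z * (f z / w z - f x / w x) ^ 2 = 0 := by
  have expand : ∀ x z, t x z * w z * (f z / w z - f x / w x) ^ 2 =
      t x z * (f z ^ 2 / w z) - 2 * (f x / w x) * (t x z * f z) +
        (f x / w x) ^ 2 * (t x z * w z) := by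
    intro x z
    field_simp [(hw z).ne']
    ring
  simp_rw [expand, sum_add_distrib, sum_sub_distrib, ← mul_sum, hf_fix, hw_fix]
  rw [sum_comm]
  simp_rw [← sum_mul, hcol, one_mul]
  rw [← sum_sub_distrib, ← sum_add_distrib]
  refine sum_eq_zero fun x _ => ?_
  field_simp [(hw x).ne']
  ring

theorem div_eq_div_of_harmonic {ι : Type*} [Fintype ι] {t : ι → ι → ℝ} {w f : ι → ℝ}
    (ht : ∀ x z, 0 ≤ t x z) (hcol : ∀ z, ∑ x, t x z = 1) (hw : ∀ z, 0 < w z)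
    (hw_fix : ∀ x, ∑ z, t x z * w z = w x) (hf_fix : ∀ x, ∑ z, t x z * f z = f x)
    {x z : ι} (hxz : 0 < t x z) : f z / w z = f x / w x := by
  have hterm : ∀ x z, 0 ≤ t x z * w z * (f z / w z - f x / w x) ^ 2 :=
    fun x z => mul_nonneg (mul_nonneg (ht x z) (hw z).le) (sq_nonneg _)
  have hzero := sum_mul_div_sub_sq_eq_zero hcol hw hw_fix hf_fix
  rw [sum_eq_zero_iff_of_nonneg fun x _ => sum_nonneg fun z _ => hterm x z] at hzero
  have h := (sum_eq_zero_iff_of_nonneg fun z _ => hterm x z).1 (hzero x (mem_univ x)) z (mem_univ z)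
  rw [mul_eq_zero, pow_eq_zero_iff two_ne_zero, sub_eq_zero] at h
  exact h.resolve_left (mul_pos hxz (hw z)).ne'

theorem IsMarkov.eq_one_of_apply_eq_zero {ι : Type*} [Fintype ι] [DecidableEq ι]
    {t : Matrix ι ι ℝ} (ht : IsMarkov t) (hoff : ∀ x z, x ≠ z → t x z = 0) : t = 1 := by
  ext x z
  rcases eq_or_ne x z with rfl | hxz
  · simpa [sum_eq_single x fun y _ hy => hoff y x hy] using ht.2 x
  · simp [hoff x z hxz, hxz]

theorem IsMarkov.eq_one_of_sum_smul_eq {V ι : Type*} [AddCommGroup V] [Module ℝ V] [Fintype ι]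
    [DecidableEq ι] {K : ι → V} (φ : Module.Dual ℝ V) (hφ : ∀ z, 0 < φ (K z))
    (hK : Pairwise fun x z => LinearIndependent ℝ ![K x, K z]) {t : Matrix ι ι ℝ}
    (ht : IsMarkov t) (hfix : ∀ x, ∑ z, t x z • K z = K x) : t = 1 := by
  have harmonic : ∀ g : Module.Dual ℝ V, ∀ x, ∑ z, t x z * g (K z) = g (K x) := fun g x => by
    simp [← hfix x, map_sum]
  refine ht.eq_one_of_apply_eq_zero fun x z hxz => ?_
  by_contra hne
  have hprop : φ (K x) • K z - φ (K z) • K x = 0 := by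
    refine (Module.forall_dual_apply_eq_zero_iff ℝ _).1 fun g => ?_
    have := div_eq_div_of_harmonic ht.1 ht.2 hφ (harmonic φ) (harmonic g)
      ((ht.1 x z).lt_of_ne' hne)
    rw [div_eq_div_iff (hφ z).ne' (hφ x).ne'] at this
    simp only [map_sub, map_smul, smul_eq_mul]
    linarith
  have := LinearIndependent.pair_iff.1 (hK hxz.symm) (φ (K x)) (-φ (K z))
    (by rw [neg_smul, ← sub_eq_add_neg, hprop])
  exact (hφ x).ne' this.1

theorem exists_dual_pos_of_isPositive {ι : Type*} [Fintype ι] {K : ι → E →L[ℂ] E}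
    (hK : ∀ z, (K z).IsPositive) (hK0 : ∀ z, K z ≠ 0) :
    ∃ φ : Module.Dual ℝ (E →L[ℂ] E), ∀ z, 0 < φ (K z) := by
  have hpos : ∀ z, ∃ ψ : E, 0 < (inner ℂ (K z ψ) ψ).re := fun z => by
    obtain ⟨ψ, hψ⟩ :=
      (hK z).toLinearMap.ne_zero_iff.1 fun h => hK0 z (ContinuousLinearMap.coe_injective h)
    exact ⟨ψ, (Complex.pos_iff.1 hψ).1⟩
  choose ψ hψ using hpos
  let φ : Module.Dual ℝ (E →L[ℂ] E) :=
    { toFun := fun S => ∑ z, (inner ℂ (S (ψ z)) (ψ z)).re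
      map_add' := fun S T => by simp [sum_add_distrib]
      map_smul' := fun c S => by simp [← Complex.coe_smul, mul_sum, mul_comm] }
  exact ⟨φ, fun z => sum_pos' (fun y _ => (hK z).re_inner_nonneg_left (ψ y))
    ⟨z, mem_univ z, hψ z⟩⟩

theorem pproc_mul [Fintype α] [Fintype β] (r : Matrix γ β ℝ) (p : Matrix β α ℝ)
    (A : α → E →L[ℂ] E) :
    pproc (r * p) A = pproc r (pproc p A) := by
  ext1 c
  simp only [pproc, Matrix.mul_apply, smul_sum, smul_smul, Complex.ofReal_sum, sum_smul,
    Complex.ofReal_mul]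
  exact sum_comm

theorem pproc_one [Fintype α] [DecidableEq α] (A : α → E →L[ℂ] E) :
    pproc (1 : Matrix α α ℝ) A = A := by
  ext1 x
  simp [pproc, Matrix.one_apply]

theorem pproc_add [Fintype α] (p q : Matrix β α ℝ) (A : α → E →L[ℂ] E) :
    pproc (p + q) A = pproc p A + pproc q A := by
  ext1 b
  simp [pproc, add_smul, sum_add_distrib]

theorem pproc_sub [Fintype α] (p q : Matrix β α ℝ) (A : α → E →L[ℂ] E) :
    pproc (p - q) A = pproc p A - pproc q A := by
  ext1 b
  simp [pproc, sub_smul]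

theorem pproc_smul [Fintype α] (c : ℝ) (p : Matrix β α ℝ) (A : α → E →L[ℂ] E) :
    pproc (c • p) A = c • pproc p A := by
  ext1 b
  simp [pproc, smul_sum, mul_smul, Complex.coe_smul]

theorem isMarkov_one [Fintype α] [DecidableEq α] : IsMarkov (1 : Matrix α α ℝ) :=
  ⟨Matrix.zero_le_one_elem, fun y => by simp [Matrix.one_apply]⟩

theorem pp_refl [Fintype α] [DecidableEq α] (A : α → E →L[ℂ] E) : PP A A :=
  ⟨(1 : Matrix α α ℝ), isMarkov_one, (pproc_one A).symm⟩

theorem IsMarkov.mul [Fintype β] [Fintype γ] {r : Matrix γ β ℝ} {p : Matrix β α ℝ}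
    (hr : IsMarkov r) (hp : IsMarkov p) : IsMarkov (r * p) := by
  refine ⟨fun c a => sum_nonneg fun b _ => mul_nonneg (hr.1 c b) (hp.1 b a), fun a => ?_⟩
  simp only [Matrix.mul_apply]
  rw [sum_comm]
  simp [← sum_mul, hr.2, hp.2]

theorem IsObservable.pproc [Fintype α] [Fintype β] {A : α → E →L[ℂ] E} {p : Matrix β α ℝ}
    (hA : IsObservable A) (hp : IsMarkov p) : IsObservable (pproc p A) := by
  refine ⟨fun b => ContinuousLinearMap.isPositive_sum _ fun a _ =>
    (hA.1 a).smul_of_nonneg (Complex.zero_le_real.2 (hp.1 b a)), ?_⟩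
  rw [← hA.2]
  simp only [_root_.pproc]
  rw [sum_comm]
  simp [← sum_smul, hp.2]

theorem IsMarkov.eq_one_of_pproc_eq_self [Fintype α] [DecidableEq α] {K : α → E →L[ℂ] E}
    (hK : ∀ z, (K z).IsPositive) (hli : Pairwise fun x z => LinearIndependent ℂ ![K x, K z])
    {t : Matrix α α ℝ} (ht : IsMarkov t) (hfix : pproc t K = K) : t = 1 := by
  rcases subsingleton_or_nontrivial α with hα | hα
  · exact ht.eq_one_of_apply_eq_zero fun x z hxz => absurd (Subsingleton.elim x z) hxz
  have hK0 : ∀ z, K z ≠ 0 := fun z => by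
    obtain ⟨x, hx⟩ := exists_ne z
    simpa using (hli hx).ne_zero 1
  obtain ⟨φ, hφ⟩ := exists_dual_pos_of_isPositive hK hK0
  exact ht.eq_one_of_sum_smul_eq φ hφ (fun x z hxz => (hli hxz).restrict_scalars' ℝ)
    fun x => by simpa [pproc, Complex.coe_smul] using congrFun hfix x

theorem IsMarkov.eq_of_mul_eq_one [Fintype α] [DecidableEq α] {r p : Matrix α α ℝ}
    (hr : IsMarkov r) (hp : ∀ y z, 0 ≤ p y z) (hrp : r * p = 1) {y z z' : α}
    (hz : 0 < p y z) (hz' : 0 < p y z') : z = z' := by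
  obtain ⟨x, -, hx⟩ : ∃ x ∈ univ, (0 : ℝ) < r x y :=
    exists_lt_of_sum_lt (by simp [hr.2 y])
  have hsupp : ∀ z, 0 < p y z → x = z := fun z hz => by
    by_contra hxz
    have hle : r x y * p y z ≤ (r * p) x z :=
      single_le_sum (f := fun y => r x y * p y z)
        (fun y _ => mul_nonneg (hr.1 x y) (hp y z)) (mem_univ y)
    rw [hrp, Matrix.one_apply_ne hxz] at hle
    linarith [mul_pos hx hz]
  exact (hsupp z hz).symm.trans (hsupp z' hz')

def detKernel [DecidableEq β] (f : α → β) : Matrix β α ℝ :=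
  fun b a => if f a = b then 1 else 0

theorem isMarkov_detKernel [Fintype β] [DecidableEq β] (f : α → β) : IsMarkov (detKernel f) :=
  ⟨fun b a => by unfold detKernel; split_ifs <;> norm_num, fun a => by simp [detKernel]⟩

theorem IsMarkov.apply_le_one [Fintype β] {P : Matrix β α ℝ} (hP : IsMarkov P) (b : β) (a : α) :
    P b a ≤ 1 :=
  (hP.2 a).symm ▸ single_le_sum (f := fun b => P b a) (fun b _ => hP.1 b a) (mem_univ b)

theorem apply_le_detKernel_mul_apply [Fintype α] [DecidableEq β] {p : Matrix α γ ℝ}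
    (hp : ∀ y x, 0 ≤ p y x) (f : α → β) (y : α) (x : γ) : p y x ≤ (detKernel f * p) (f y) x := by
  rw [Matrix.mul_apply]
  calc p y x = detKernel f (f y) y * p y x := by simp [detKernel]
    _ ≤ ∑ y', detKernel f (f y) y' * p y' x :=
      single_le_sum (f := fun y' => detKernel f (f y) y' * p y' x)
        (fun y' _ => mul_nonneg (by unfold detKernel; split_ifs <;> norm_num) (hp y' x))
        (mem_univ y)

theorem pproc_detKernel [Fintype α] [DecidableEq β] (f : α → β) (A : α → E →L[ℂ] E) (b : β) :
    pproc (detKernel f) A b = ∑ a, if f a = b then A a else 0 := by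
  simp [pproc, detKernel, apply_ite]

-- `cone G (Function.eval ℓ)` is the paper's `Cℓ(G)`.
def cone [Fintype α] [Fintype β] (G : α → E →L[ℂ] E) (f : α → β) : Set (Matrix β α ℝ) :=
  {u | pproc u G = 0 ∧ (∀ a, ∑ b, u b a = 0) ∧
    ∀ b a, (b = f a → u b a ≤ 0) ∧ (b ≠ f a → 0 ≤ u b a)}

theorem IsMarkov.sub_detKernel_mem_cone [Fintype α] [Fintype β] [DecidableEq β]
    {P : Matrix β α ℝ} (hP : IsMarkov P) {G : α → E →L[ℂ] E} {f : α → β}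
    (h : pproc P G = pproc (detKernel f) G) : P - detKernel f ∈ cone G f := by
  refine ⟨by rw [pproc_sub, h, sub_self], fun a => ?_, fun b a => ⟨fun hb => ?_, fun hb => ?_⟩⟩
  · simp [sum_sub_distrib, hP.2, (isMarkov_detKernel f).2]
  · simpa [detKernel, hb] using hP.apply_le_one b a
  · simpa [detKernel, Ne.symm hb] using hP.1 b a

theorem exists_isMarkov_detKernel_add_smul [Fintype α] [Fintype β] [DecidableEq β] {f : α → β}
    {u : Matrix β α ℝ} (hsum : ∀ a, ∑ b, u b a = 0) (hoff : ∀ b a, b ≠ f a → 0 ≤ u b a) :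
    ∃ ε : ℝ, 0 < ε ∧ IsMarkov (detKernel f + ε • u) ∧ ∀ a, 0 < (detKernel f + ε • u) (f a) a := by
  have hsmall : ∀ᶠ ε in 𝓝[>] (0 : ℝ), ∀ a, -1 < ε * u (f a) a := by
    refine eventually_all.2 fun a => ?_
    have : Tendsto (fun ε => ε * u (f a) a) (𝓝[>] 0) (𝓝 0) := by
      simpa using (tendsto_nhdsWithin_of_tendsto_nhds (tendsto_id (x := 𝓝 (0 : ℝ)))).mul_const
        (u (f a) a)
    exact this.eventually (lt_mem_nhds (by norm_num))
  obtain ⟨ε, hε, hεpos⟩ := (hsmall.and self_mem_nhdsWithin).exists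
  have hdiag : ∀ a, 0 < (detKernel f + ε • u) (f a) a := fun a => by
    simp only [Matrix.add_apply, detKernel, ↓reduceIte, Matrix.smul_apply, smul_eq_mul]
    linarith [hε a]
  refine ⟨ε, hεpos, ⟨fun b a => ?_, fun a => ?_⟩, hdiag⟩
  · rcases eq_or_ne b (f a) with rfl | hb
    · exact (hdiag a).le
    · simpa [detKernel, Ne.symm hb] using mul_nonneg (le_of_lt hεpos) (hoff b a hb)
  · simp [sum_add_distrib, ← mul_sum, hsum, detKernel]

section Product

variable {n : ℕ} {Ω : Fin n → Type*} [∀ ℓ, Fintype (Ω ℓ)] [∀ ℓ, DecidableEq (Ω ℓ)]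

variable (Ω) in
abbrev coordKernel (ℓ : Fin n) : Matrix (Ω ℓ) (∀ m, Ω m) ℝ :=
  detKernel (Function.eval ℓ)

theorem isJoint_iff {A : ∀ ℓ, Ω ℓ → E →L[ℂ] E} {G : (∀ ℓ, Ω ℓ) → E →L[ℂ] E} :
    IsJoint A G ↔ IsObservable G ∧ ∀ ℓ, pproc (coordKernel Ω ℓ) G = A ℓ := by
  simp only [IsJoint, funext_iff, pproc_detKernel]

def resample (ℓ : Fin n) (q : Matrix (Ω ℓ) (∀ m, Ω m) ℝ) : Matrix (∀ m, Ω m) (∀ m, Ω m) ℝ :=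
  fun y x => ∑ a, if y = Function.update x ℓ a then q a x else 0

theorem resample_update (ℓ : Fin n) (q : Matrix (Ω ℓ) (∀ m, Ω m) ℝ) (x : ∀ m, Ω m) (a : Ω ℓ) :
    resample ℓ q (Function.update x ℓ a) x = q a x := by
  simp [resample, (Function.update_injective x ℓ).eq_iff]

theorem resample_apply_self (ℓ : Fin n) (q : Matrix (Ω ℓ) (∀ m, Ω m) ℝ) (y : ∀ m, Ω m) :
    resample ℓ q y y = q (y ℓ) y := by
  simpa using resample_update ℓ q y (y ℓ)

theorem IsMarkov.resample {ℓ : Fin n} {q : Matrix (Ω ℓ) (∀ m, Ω m) ℝ} (hq : IsMarkov q) :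
    IsMarkov (resample ℓ q) := by
  refine ⟨fun y x => sum_nonneg fun a _ => ?_, fun x => ?_⟩
  · split_ifs
    exacts [hq.1 a x, le_rfl]
  · simp only [_root_.resample]
    rw [sum_comm]
    simp [hq.2 x]

theorem coordKernel_mul_resample (ℓ m : Fin n) (q : Matrix (Ω ℓ) (∀ m, Ω m) ℝ) :
    coordKernel Ω m * resample ℓ q =
      fun b x => ∑ a, if Function.update x ℓ a m = b then q a x else 0 := by
  ext b x
  simp only [Matrix.mul_apply, detKernel, resample, mul_sum]
  rw [sum_comm]
  simp

theorem coordKernel_mul_resample_self (ℓ : Fin n) (q : Matrix (Ω ℓ) (∀ m, Ω m) ℝ) :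
    coordKernel Ω ℓ * resample ℓ q = q := by
  rw [coordKernel_mul_resample]
  ext b x
  simp

theorem coordKernel_mul_resample_of_ne {ℓ m : Fin n} (hm : m ≠ ℓ) {q : Matrix (Ω ℓ) (∀ m, Ω m) ℝ}
    (hq : IsMarkov q) : coordKernel Ω m * resample ℓ q = coordKernel Ω m := by
  rw [coordKernel_mul_resample]
  ext b x
  simp [Function.update_of_ne hm, detKernel, hq.2]

theorem IsMarkov.eq_one_of_coordKernel_mul_eq {p : Matrix (∀ m, Ω m) (∀ m, Ω m) ℝ}
    (hp : IsMarkov p) (h : ∀ ℓ, coordKernel Ω ℓ * p = coordKernel Ω ℓ) : p = 1 := by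
  refine hp.eq_one_of_apply_eq_zero fun y x hyx => le_antisymm ?_ (hp.1 y x)
  obtain ⟨ℓ, hℓ⟩ := Function.ne_iff.1 hyx
  simpa [h ℓ, detKernel, Ne.symm hℓ] using apply_le_detKernel_mul_apply hp.1 (Function.eval ℓ) y x

theorem IsJoint.pproc_resample {A : ∀ ℓ, Ω ℓ → E →L[ℂ] E} {G : (∀ ℓ, Ω ℓ) → E →L[ℂ] E}
    (hG : IsJoint A G) {ℓ : Fin n} {q : Matrix (Ω ℓ) (∀ m, Ω m) ℝ} (hq : IsMarkov q)
    (hGq : pproc q G = pproc (coordKernel Ω ℓ) G) : IsJoint A (pproc (resample ℓ q) G) := by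
  refine isJoint_iff.2 ⟨hG.1.pproc hq.resample, fun m => ?_⟩
  rw [← pproc_mul, ← (isJoint_iff.1 hG).2 m]
  rcases eq_or_ne m ℓ with rfl | hm
  · rw [coordKernel_mul_resample_self, hGq]
  · rw [coordKernel_mul_resample_of_ne hm hq]

theorem eq_zero_of_mem_cone_of_minimal {A : ∀ ℓ, Ω ℓ → E →L[ℂ] E} {G : (∀ ℓ, Ω ℓ) → E →L[ℂ] E}
    (hG : IsJoint A G) (hli : Pairwise fun x z => LinearIndependent ℂ ![G x, G z])
    (hmin : ∀ G', IsJoint A G' → PP G' G → PP G G') {ℓ : Fin n}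
    {u : Matrix (Ω ℓ) (∀ m, Ω m) ℝ} (hu : u ∈ cone G (Function.eval ℓ)) : u = 0 := by
  obtain ⟨hGu, hsum, hsign⟩ := hu
  obtain ⟨ε, hε, hq, hqdiag⟩ :=
    exists_isMarkov_detKernel_add_smul hsum fun b x => (hsign b x).2
  set q := coordKernel Ω ℓ + ε • u
  have hp := hq.resample
  have hG' : IsJoint A (pproc (resample ℓ q) G) :=
    hG.pproc_resample hq (by rw [pproc_add, pproc_smul, hGu, smul_zero, add_zero])
  obtain ⟨(r : Matrix _ _ ℝ), hr, hGr⟩ := hmin _ hG' ⟨_, hp, rfl⟩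
  have hrp : r * resample ℓ q = 1 :=
    (hr.mul hp).eq_one_of_pproc_eq_self hG.1.1 hli (by rw [pproc_mul, ← hGr])
  have hoff : ∀ b x, b ≠ x ℓ → u b x = 0 := fun b x hb => by
    have hq0 : q b x = 0 := by
      refine ((hq.1 b x).eq_or_lt.resolve_right fun hpos => hb ?_).symm
      have := hr.eq_of_mul_eq_one hp.1 hrp (y := Function.update x ℓ b)
        (by rwa [resample_update]) (by rw [resample_apply_self]; exact hqdiag _)
      simpa using (congrFun this ℓ).symm
    simpa [q, detKernel, Ne.symm hb, hε.ne'] using hq0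
  ext b x
  rcases eq_or_ne b (x ℓ) with rfl | hb
  · simpa [sum_eq_single (x ℓ) fun b _ hb => hoff b x hb] using hsum x
  · exact hoff b x hb

theorem pp_of_cones_eq_zero {A : ∀ ℓ, Ω ℓ → E →L[ℂ] E} {G : (∀ ℓ, Ω ℓ) → E →L[ℂ] E}
    (hG : IsJoint A G) (hC : ∀ ℓ, ∀ u ∈ cone G (Function.eval ℓ), u = 0)
    {G' : (∀ ℓ, Ω ℓ) → E →L[ℂ] E} (hG' : IsJoint A G') (hPP : PP G' G) : PP G G' := by
  obtain ⟨(p : Matrix _ _ ℝ), hp, rfl⟩ := hPP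
  have hmarg : ∀ ℓ, coordKernel Ω ℓ * p = coordKernel Ω ℓ := fun ℓ =>
    sub_eq_zero.1 <| hC ℓ _ <|
      ((isMarkov_detKernel (Function.eval ℓ)).mul hp).sub_detKernel_mem_cone <| by
        rw [pproc_mul, (isJoint_iff.1 hG').2, (isJoint_iff.1 hG).2]
  rw [hp.eq_one_of_coordKernel_mul_eq hmarg, pproc_one]
  exact pp_refl G

end Product

end

/-- For a pairwise linearly independent joint observable `G`, minimality is equivalent
to the vanishing of the polyhedral cones `Cℓ(G)`. -/
theorem minimal_iff_cones_trivial {n : ℕ} {Ω : Fin n → Type*}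
    [∀ ℓ, Fintype (Ω ℓ)] [∀ ℓ, DecidableEq (Ω ℓ)]
    (A : ∀ ℓ, Ω ℓ → H →L[ℂ] H) (G : (∀ ℓ, Ω ℓ) → H →L[ℂ] H)
    (hG : IsJoint A G)
    (hpli : ∀ x1 x2 : ∀ ℓ, Ω ℓ, x1 ≠ x2 → LinearIndependent ℂ ![G x1, G x2]) :
    (∀ G' : (∀ ℓ, Ω ℓ) → H →L[ℂ] H, IsJoint A G' → PP G' G → PP G G') ↔
    ∀ (ℓ : Fin n) (u : Ω ℓ → (∀ ℓ, Ω ℓ) → ℝ),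
      (∀ x' : Ω ℓ, ∑ x : ∀ ℓ, Ω ℓ, (u x' x : ℂ) • G x = 0) →
      (∀ x : ∀ ℓ, Ω ℓ, ∑ x' : Ω ℓ, u x' x = 0) →
      (∀ (x' : Ω ℓ) (x : ∀ ℓ, Ω ℓ),
        (x' = x ℓ → u x' x ≤ 0) ∧ (x' ≠ x ℓ → 0 ≤ u x' x)) →
      u = 0 :=
  ⟨fun hmin ℓ u h1 h2 h3 => eq_zero_of_mem_cone_of_minimal hG hpli hmin ⟨funext h1, h2, h3⟩,
    fun hC _ => pp_of_cones_eq_zero hG fun ℓ u hu => hC ℓ u (congrFun hu.1) hu.2.1 hu.2.2⟩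
end
end

section
/- Let A : Ω → B(H) be a pairwise linearly independent observable on a finite set Ω. Then A is minimal sufficient: for any Markov kernel q : Ω×Ω → ℝ (q ≥ 0, ∑_x q(x,y)=1), if q∗A = A then q(x,x') = δ_{x,x'} for all x, x' ∈ Ω. -/
/-! Fix `x ≠ y`. Positivity of the effects gives a real functional `f` with `a z := f (A z) > 0`
for every `z`, and pairwise independence gives a real functional `g` with
`t x ≠ t y`, where `t z := g (A z) / a z`. The kernel fixes both `a` and `a * t` and its
columns sum to one, so `∑ x y, q x y * a y * (t y - t x) ^ 2 = 0`: this is the equality case of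
Jensen's inequality for `t ↦ t ^ 2` along the row-stochastic matrix `q x y * a y / a x`, which
has `a` as stationary measure. Every term is nonnegative, hence `q x y = 0`. -/

noncomputable section

open scoped BigOperators

variable {H : Type*} [NormedAddCommGroup H] [InnerProductSpace ℂ H] [CompleteSpace H]

open Finset

namespace IsMarkov

variable {ι : Type*} [Fintype ι] {q : ι → ι → ℝ}

theorem sum_sum_mul_sq_sub_eq_zero (hq : IsMarkov q) {a t : ι → ℝ}
    (ha : ∀ x, ∑ y, q x y * a y = a x) (hat : ∀ x, ∑ y, q x y * (a y * t y) = a x * t x) :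
    ∑ x, ∑ y, q x y * a y * (t y - t x) ^ 2 = 0 := by
  have hcol : ∑ x, ∑ y, q x y * (a y * t y ^ 2) = ∑ y, a y * t y ^ 2 := by
    rw [sum_comm]
    simp_rw [← sum_mul, hq.2, one_mul]
  have hcross : ∑ x, ∑ y, q x y * (a y * t y) * t x = ∑ x, a x * t x * t x := by
    simp_rw [← sum_mul, hat]
  have hrow : ∑ x, ∑ y, q x y * a y * t x ^ 2 = ∑ x, a x * t x ^ 2 := by
    simp_rw [← sum_mul, ha]
  calc ∑ x, ∑ y, q x y * a y * (t y - t x) ^ 2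
      = ∑ x, ∑ y, q x y * (a y * t y ^ 2) - 2 * ∑ x, ∑ y, q x y * (a y * t y) * t x
          + ∑ x, ∑ y, q x y * a y * t x ^ 2 := by
        simp only [mul_sum, ← sum_sub_distrib, ← sum_add_distrib]
        congr! 2 with x - y -
        ring
    _ = 0 := by
        rw [hcol, hcross, hrow]
        simp only [mul_sum, ← sum_sub_distrib, ← sum_add_distrib]
        exact sum_eq_zero fun x _ => by ring

theorem apply_eq_zero_of_ne (hq : IsMarkov q) {a t : ι → ℝ} (ha_pos : ∀ y, 0 < a y)
    (ha : ∀ x, ∑ y, q x y * a y = a x) (hat : ∀ x, ∑ y, q x y * (a y * t y) = a x * t x)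
    {x y : ι} (hxy : t x ≠ t y) : q x y = 0 := by
  have hterm : ∀ x y, 0 ≤ q x y * a y * (t y - t x) ^ 2 := fun x y =>
    mul_nonneg (mul_nonneg (hq.1 x y) (ha_pos y).le) (sq_nonneg _)
  have hxy0 : q x y * a y * (t y - t x) ^ 2 = 0 := by
    have := (sum_eq_zero_iff_of_nonneg fun x _ => sum_nonneg fun y _ => hterm x y).mp
      (hq.sum_sum_mul_sq_sub_eq_zero ha hat) x (mem_univ x)
    exact (sum_eq_zero_iff_of_nonneg fun y _ => hterm x y).mp this y (mem_univ y)
  have : (t y - t x) ^ 2 ≠ 0 := pow_ne_zero 2 (sub_ne_zero.mpr hxy.symm)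
  simpa [(ha_pos y).ne', this] using hxy0

theorem eq_ite_of_apply_eq_zero [DecidableEq ι] (hq : IsMarkov q)
    (h : ∀ x y, x ≠ y → q x y = 0) (x y : ι) : q x y = if x = y then 1 else 0 := by
  split_ifs with hxy
  · subst hxy
    rw [← hq.2 x, Fintype.sum_eq_single x fun z hzx => h z x hzx]
  · exact h x y hxy

theorem apply_eq_zero_of_linearIndependent {V : Type*} [AddCommGroup V] [Module ℝ V]
    (hq : IsMarkov q) {A : ι → V} (hA : ∀ x, ∑ y, q x y • A y = A x)
    (f : V →ₗ[ℝ] ℝ) (hf : ∀ y, 0 < f (A y)) {x y : ι}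
    (hxy : LinearIndependent ℝ ![A x, A y]) : q x y = 0 := by
  have hD : f (A y) • A x - f (A x) • A y ≠ 0 := by
    intro h0
    have := LinearIndependent.pair_iff.mp hxy (f (A y)) (-f (A x))
      (by rw [neg_smul, ← sub_eq_add_neg, h0])
    exact (hf y).ne' this.1
  obtain ⟨g, hg⟩ := Module.Projective.exists_dual_ne_zero ℝ hD
  refine hq.apply_eq_zero_of_ne (a := fun z => f (A z)) (t := fun z => g (A z) / f (A z))
    hf (fun x => ?_) (fun x => ?_) ?_
  · simpa [map_sum] using congrArg f (hA x)
  · simp only [mul_div_cancel₀ _ (hf _).ne']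
    simpa [map_sum] using congrArg g (hA x)
  · intro ht
    apply hg
    rw [div_eq_div_iff (hf x).ne' (hf y).ne'] at ht
    simp only [map_sub, map_smul, smul_eq_mul]
    linarith

end IsMarkov

section PositiveFunctional

variable {E : Type*} [NormedAddCommGroup E] [InnerProductSpace ℂ E]

def reApplyInnerSelfₗ (v : E) : (E →L[ℂ] E) →ₗ[ℝ] ℝ where
  toFun T := T.reApplyInnerSelf v
  map_add' S T := by simp [ContinuousLinearMap.reApplyInnerSelf, inner_add_left]
  map_smul' r T := by
    simp only [ContinuousLinearMap.reApplyInnerSelf, smul_apply,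
      RingHom.id_apply, smul_eq_mul]
    rw [RCLike.real_smul_eq_coe_smul (K := ℂ), inner_smul_real_left, RCLike.smul_re]

theorem exists_linearMap_pos_of_isPositive {ι : Type*} [Fintype ι] {A : ι → E →L[ℂ] E}
    (hpos : ∀ i, (A i).IsPositive) (hne : ∀ i, A i ≠ 0) :
    ∃ f : (E →L[ℂ] E) →ₗ[ℝ] ℝ, ∀ i, 0 < f (A i) := by
  have hv : ∀ i, ∃ v, 0 < (A i).reApplyInnerSelf v := fun i => by
    obtain ⟨v, hv⟩ := (hpos i).toLinearMap.ne_zero_iff.mp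
      fun h0 => hne i (ContinuousLinearMap.coe_injective h0)
    exact ⟨v, (Complex.pos_iff.mp hv).1⟩
  choose v hv using hv
  refine ⟨∑ j, reApplyInnerSelfₗ (v j), fun i => ?_⟩
  rw [LinearMap.sum_apply]
  exact sum_pos' (fun j _ => (hpos i).2 (v j)) ⟨i, mem_univ i, hv i⟩

end PositiveFunctional

theorem ne_zero_of_pairwise_linearIndependent {ι R M : Type*} [Nontrivial ι] [Ring R]
    [Nontrivial R] [AddCommGroup M] [Module R M] {A : ι → M}
    (h : ∀ x y, x ≠ y → LinearIndependent R ![A x, A y]) (z : ι) : A z ≠ 0 := by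
  obtain ⟨w, hw⟩ := exists_ne z
  simpa using (h z w hw.symm).ne_zero 0

/-- A pairwise linearly independent observable is minimal sufficient: any Markov kernel
fixing it is the identity kernel. -/
theorem pairwise_linearIndependent_minimal_sufficient {Ω : Type*} [Fintype Ω]
    [DecidableEq Ω]
    (A : Ω → H →L[ℂ] H) (hA : IsObservable A)
    (hpli : ∀ x1 x2 : Ω, x1 ≠ x2 → LinearIndependent ℂ ![A x1, A x2])
    (q : Ω → Ω → ℝ) (hq : IsMarkov q) (h : pproc q A = A) :
    ∀ x x' : Ω, q x x' = if x = x' then 1 else 0 := by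
  refine hq.eq_ite_of_apply_eq_zero fun x y hxy => ?_
  have : Nontrivial Ω := ⟨⟨x, y, hxy⟩⟩
  obtain ⟨f, hf⟩ := exists_linearMap_pos_of_isPositive hA.1
    (ne_zero_of_pairwise_linearIndependent hpli)
  -- `(r : ℂ) • T` and `r • T` agree definitionally
  have hfix : ∀ x, ∑ y, q x y • A y = A x := congrFun h
  exact hq.apply_eq_zero_of_linearIndependent hfix f hf ((hpli x y hxy).restrict_scalars' ℝ)
end
end

section
/- Let Eᵃ_α and Eᵇ_β be dichotomic qubit observables Eᵃ_α(±) = ½(α·1 ± a·σ), Eᵇ_β(±) = ½(β·1 ± b·σ), and let γ ∈ ℝ, g ∈ ℝ³. Define G(+,+) = ½(γ·1 + g·σ), G(+,−) = Eᵃ_α(+) − G(+,+), G(−,+) = Eᵇ_β(+) − G(+,+), G(−,−) = 1 + G(+,+) − Eᵃ_α(+) − Eᵇ_β(+). Then all four operators G(·,·) are positive semidefinite if and only if ‖g‖ ≤ γ, ‖a−g‖ ≤ α−γ, ‖b−g‖ ≤ β−γ, and ‖a+b−g‖ ≤ 2+γ−α−β. -/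
/-!
A Hermitian 2×2 matrix is positive semidefinite iff its trace and determinant are nonnegative,
since its two real eigenvalues then have nonnegative sum and product. For `½(t·1 + v·σ)` these
are `t` and `(t² - ‖v‖²)/4`, so positivity means `‖v‖ ≤ t`. Since `v ↦ v·σ` is linear, the four
operators `G(·,·)` are of this form, with parameters `(γ, g)`, `(α - γ, a - g)`, `(β - γ, b - g)`
and `(2 + γ - α - β, g - a - b)`.
-/

noncomputable section

open Complex
open scoped ComplexOrder

/-- The Pauli matrices. -/
def σ1 : Matrix (Fin 2) (Fin 2) ℂ := !![0, 1; 1, 0]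
def σ2 : Matrix (Fin 2) (Fin 2) ℂ := !![0, -Complex.I; Complex.I, 0]
def σ3 : Matrix (Fin 2) (Fin 2) ℂ := !![1, 0; 0, -1]

/-- `v ⋅ σ` for a real vector `v ∈ ℝ³`. -/
def dotσ (v : EuclideanSpace ℝ (Fin 3)) : Matrix (Fin 2) (Fin 2) ℂ :=
  (v 0 : ℂ) • σ1 + (v 1 : ℂ) • σ2 + (v 2 : ℂ) • σ3

theorem Matrix.IsHermitian.posSemidef_iff_trace_nonneg_and_det_nonneg {𝕜 : Type*} [RCLike 𝕜]
    {A : Matrix (Fin 2) (Fin 2) 𝕜} (hA : A.IsHermitian) :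
    A.PosSemidef ↔ 0 ≤ A.trace ∧ 0 ≤ A.det := by
  rw [hA.posSemidef_iff_eigenvalues_nonneg, hA.trace_eq_sum_eigenvalues,
    hA.det_eq_prod_eigenvalues, Fin.sum_univ_two, Fin.prod_univ_two, Pi.le_def,
    Fin.forall_fin_two, Pi.zero_apply, Pi.zero_apply, ← RCLike.ofReal_add, ← RCLike.ofReal_mul,
    RCLike.ofReal_nonneg, RCLike.ofReal_nonneg]
  constructor
  · rintro ⟨hx, hy⟩
    exact ⟨add_nonneg hx hy, mul_nonneg hx hy⟩
  · rintro ⟨hsum, hprod⟩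
    constructor <;> nlinarith

lemma dotσ_add (u v : EuclideanSpace ℝ (Fin 3)) : dotσ (u + v) = dotσ u + dotσ v := by
  simp only [dotσ, PiLp.add_apply, ofReal_add, add_smul]
  abel

lemma dotσ_sub (u v : EuclideanSpace ℝ (Fin 3)) : dotσ (u - v) = dotσ u - dotσ v := by
  simp only [dotσ, PiLp.sub_apply, ofReal_sub, sub_smul]
  abel

def qubitOp (t : ℝ) (v : EuclideanSpace ℝ (Fin 3)) : Matrix (Fin 2) (Fin 2) ℂ :=
  (1 / 2 : ℂ) • ((t : ℂ) • 1 + dotσ v)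

lemma qubitOp_add (s t : ℝ) (u v : EuclideanSpace ℝ (Fin 3)) :
    qubitOp s u + qubitOp t v = qubitOp (s + t) (u + v) := by
  simp only [qubitOp, dotσ_add, ofReal_add]
  module

lemma qubitOp_sub (s t : ℝ) (u v : EuclideanSpace ℝ (Fin 3)) :
    qubitOp s u - qubitOp t v = qubitOp (s - t) (u - v) := by
  simp only [qubitOp, dotσ_sub, ofReal_sub]
  module

lemma one_eq_qubitOp : (1 : Matrix (Fin 2) (Fin 2) ℂ) = qubitOp 2 0 := by
  simp [qubitOp, dotσ]

lemma qubitOp_eq_of (t : ℝ) (v : EuclideanSpace ℝ (Fin 3)) :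
    qubitOp t v =
      !![((t + v 2) / 2 : ℂ), (v 0 - v 1 * I) / 2; (v 0 + v 1 * I) / 2, (t - v 2) / 2] := by
  ext i j
  fin_cases i <;> fin_cases j <;> simp [qubitOp, dotσ, σ1, σ2, σ3] <;> ring

lemma isHermitian_qubitOp (t : ℝ) (v : EuclideanSpace ℝ (Fin 3)) : (qubitOp t v).IsHermitian := by
  rw [qubitOp_eq_of]
  ext i j
  fin_cases i <;> fin_cases j <;> simp [conj_ofReal, sub_eq_add_neg]

lemma trace_qubitOp (t : ℝ) (v : EuclideanSpace ℝ (Fin 3)) : (qubitOp t v).trace = t := by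
  rw [qubitOp_eq_of, Matrix.trace_fin_two_of]
  ring

lemma det_qubitOp (t : ℝ) (v : EuclideanSpace ℝ (Fin 3)) :
    (qubitOp t v).det = ((t ^ 2 - ‖v‖ ^ 2) / 4 : ℝ) := by
  rw [qubitOp_eq_of, Matrix.det_fin_two_of, EuclideanSpace.real_norm_sq_eq, Fin.sum_univ_three]
  push_cast
  linear_combination ((v 1 : ℂ) ^ 2 / 4) * I_sq

lemma posSemidef_qubitOp_iff (t : ℝ) (v : EuclideanSpace ℝ (Fin 3)) :
    (qubitOp t v).PosSemidef ↔ ‖v‖ ≤ t := by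
  rw [(isHermitian_qubitOp t v).posSemidef_iff_trace_nonneg_and_det_nonneg, trace_qubitOp,
    det_qubitOp, zero_le_real, zero_le_real]
  constructor
  · rintro ⟨ht, hdet⟩
    exact (sq_le_sq₀ (norm_nonneg v) ht).1 (by linarith)
  · intro h
    have ht : 0 ≤ t := (norm_nonneg v).trans h
    exact ⟨ht, by nlinarith [norm_nonneg v]⟩

theorem qubit_joint_posSemidef_iff_general (α β γ : ℝ) (a b g : EuclideanSpace ℝ (Fin 3)) :
    (((1 / 2 : ℂ) • ((γ : ℂ) • (1 : Matrix (Fin 2) (Fin 2) ℂ) + dotσ g)).PosSemidef ∧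
     ((1 / 2 : ℂ) • ((α : ℂ) • (1 : Matrix (Fin 2) (Fin 2) ℂ) + dotσ a) -
       (1 / 2 : ℂ) • ((γ : ℂ) • (1 : Matrix (Fin 2) (Fin 2) ℂ) + dotσ g)).PosSemidef ∧
     ((1 / 2 : ℂ) • ((β : ℂ) • (1 : Matrix (Fin 2) (Fin 2) ℂ) + dotσ b) -
       (1 / 2 : ℂ) • ((γ : ℂ) • (1 : Matrix (Fin 2) (Fin 2) ℂ) + dotσ g)).PosSemidef ∧
     ((1 : Matrix (Fin 2) (Fin 2) ℂ) +
       (1 / 2 : ℂ) • ((γ : ℂ) • (1 : Matrix (Fin 2) (Fin 2) ℂ) + dotσ g) -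
       (1 / 2 : ℂ) • ((α : ℂ) • (1 : Matrix (Fin 2) (Fin 2) ℂ) + dotσ a) -
       (1 / 2 : ℂ) • ((β : ℂ) • (1 : Matrix (Fin 2) (Fin 2) ℂ) + dotσ b)).PosSemidef) ↔
    (‖g‖ ≤ γ ∧ ‖a - g‖ ≤ α - γ ∧ ‖b - g‖ ≤ β - γ ∧
      ‖a + b - g‖ ≤ 2 + γ - α - β) := by
  change (qubitOp γ g).PosSemidef ∧ (qubitOp α a - qubitOp γ g).PosSemidef ∧
    (qubitOp β b - qubitOp γ g).PosSemidef ∧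
    (1 + qubitOp γ g - qubitOp α a - qubitOp β b).PosSemidef ↔ _
  have hnorm : ‖0 + g - a - b‖ = ‖a + b - g‖ := by
    rw [zero_add, sub_sub, norm_sub_rev]
  simp only [one_eq_qubitOp, qubitOp_add, qubitOp_sub, posSemidef_qubitOp_iff, hnorm]

/-- The four effects of the candidate joint observable `G_{γ,g}` of two dichotomic qubit
observables are positive semidefinite iff the four norm inequalities hold. -/
theorem qubit_joint_posSemidef_iff (α β γ : ℝ) (a b g : EuclideanSpace ℝ (Fin 3))
    (hα : α ∈ Set.Icc (0 : ℝ) 2) (hβ : β ∈ Set.Icc (0 : ℝ) 2)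
    (ha : ‖a‖ ≤ min α (2 - α)) (hb : ‖b‖ ≤ min β (2 - β)) :
    (((1 / 2 : ℂ) • ((γ : ℂ) • (1 : Matrix (Fin 2) (Fin 2) ℂ) + dotσ g)).PosSemidef ∧
     ((1 / 2 : ℂ) • ((α : ℂ) • (1 : Matrix (Fin 2) (Fin 2) ℂ) + dotσ a) -
       (1 / 2 : ℂ) • ((γ : ℂ) • (1 : Matrix (Fin 2) (Fin 2) ℂ) + dotσ g)).PosSemidef ∧
     ((1 / 2 : ℂ) • ((β : ℂ) • (1 : Matrix (Fin 2) (Fin 2) ℂ) + dotσ b) -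
       (1 / 2 : ℂ) • ((γ : ℂ) • (1 : Matrix (Fin 2) (Fin 2) ℂ) + dotσ g)).PosSemidef ∧
     ((1 : Matrix (Fin 2) (Fin 2) ℂ) +
       (1 / 2 : ℂ) • ((γ : ℂ) • (1 : Matrix (Fin 2) (Fin 2) ℂ) + dotσ g) -
       (1 / 2 : ℂ) • ((α : ℂ) • (1 : Matrix (Fin 2) (Fin 2) ℂ) + dotσ a) -
       (1 / 2 : ℂ) • ((β : ℂ) • (1 : Matrix (Fin 2) (Fin 2) ℂ) + dotσ b)).PosSemidef) ↔
    (‖g‖ ≤ γ ∧ ‖a - g‖ ≤ α - γ ∧ ‖b - g‖ ≤ β - γ ∧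
      ‖a + b - g‖ ≤ 2 + γ - α - β) :=
  qubit_joint_posSemidef_iff_general α β γ a b g
end
end
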